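/- arXiv:1403.0619 — 6 statements merged into one kernel-verified Lean document; each statement's English description precedes it below -/
import Mathlib

section
/- Let a > 0 and let F : ℝ → ℂ be continuous. Then for all smooth functions ψ, φ compactly supported in (0,a), ∫₀ᵃ∫₀ᵃ ( conj(ψ'(x)) φ(y) + conj(ψ(x)) φ'(y) ) F(x−y) dx dy = 0. (This expresses that the operator D_F : F_φ ↦ F_{φ'} is skew-Hermitian with respect to the sesquilinear form ⟨F_ψ, F_φ⟩ = ∫₀ᵃ∫₀ᵃ conj(ψ(x)) φ(y) F(x−y) dx dy.) -/
open MeasureTheory ComplexConjugate Set Function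

theorem stmt_1 (a : ℝ) (ha : 0 < a) (F : ℝ → ℂ) (hF : Continuous F)
    (ψ φ : ℝ → ℂ) (hψ : ContDiff ℝ (⊤ : ℕ∞) ψ) (hψs : tsupport ψ ⊆ Set.Ioo 0 a)
    (hφ : ContDiff ℝ (⊤ : ℕ∞) φ) (hφs : tsupport φ ⊆ Set.Ioo 0 a) :
    ∫ x in (0:ℝ)..a, ∫ y in (0:ℝ)..a,
      (conj (deriv ψ x) * φ y + conj (ψ x) * deriv φ y) * F (x - y) = 0 := by
  have hψc : Continuous ψ := hψ.continuous
  have hφc : Continuous φ := hφ.continuous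
  have hψ'c : Continuous (deriv ψ) := hψ.continuous_deriv (by simp)
  have hφ'c : Continuous (deriv φ) := hφ.continuous_deriv (by simp)
  have hconj : Continuous (starRingEnd ℂ) := RCLike.continuous_conj
  have hmemψ : ∀ x, x ∉ tsupport ψ → ψ x = 0 ∧ deriv ψ x = 0 := fun x hx =>
    ⟨image_eq_zero_of_notMem_tsupport hx,
      not_imp_comm.mp (fun h => support_deriv_subset h) hx⟩
  have hmemφ : ∀ y, y ∉ tsupport φ → φ y = 0 ∧ deriv φ y = 0 := fun y hy =>
    ⟨image_eq_zero_of_notMem_tsupport hy,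
      not_imp_comm.mp (fun h => support_deriv_subset h) hy⟩
  -- Step 1: inner interval integral to ℝ, then substitute y ↦ x - y
  have h1 : ∀ x, (∫ y in (0:ℝ)..a,
      (conj (deriv ψ x) * φ y + conj (ψ x) * deriv φ y) * F (x - y)) =
      ∫ y, (conj (deriv ψ x) * φ (x - y) + conj (ψ x) * deriv φ (x - y)) * F y := by
    intro x
    have hsub : support (fun y =>
        (conj (deriv ψ x) * φ y + conj (ψ x) * deriv φ y) * F (x - y)) ⊆ Set.Ioc 0 a := by
      intro y hy
      by_contra hyn
      have hyt : y ∉ tsupport φ := fun h => hyn (Ioo_subset_Ioc_self (hφs h))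
      obtain ⟨e1, e2⟩ := hmemφ y hyt
      simp [e1, e2] at hy
    rw [intervalIntegral.integral_eq_integral_of_support_subset hsub]
    have := MeasureTheory.integral_sub_left_eq_self
      (fun v => (conj (deriv ψ x) * φ (x - v) + conj (ψ x) * deriv φ (x - v)) * F v)
      volume x
    simp only [sub_sub_cancel] at this
    exact this
  simp_rw [h1]
  -- Step 2: outer interval integral to ℝ
  have hsub2 : support (fun x => ∫ y,
      (conj (deriv ψ x) * φ (x - y) + conj (ψ x) * deriv φ (x - y)) * F y) ⊆ Set.Ioc 0 a := by
    intro x hx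
    by_contra hxn
    have hxt : x ∉ tsupport ψ := fun h => hxn (Ioo_subset_Ioc_self (hψs h))
    obtain ⟨e1, e2⟩ := hmemψ x hxt
    simp [e1, e2] at hx
  rw [intervalIntegral.integral_eq_integral_of_support_subset hsub2]
  -- Step 3: Fubini
  have hInt : Integrable (fun p : ℝ × ℝ =>
      (conj (deriv ψ p.1) * φ (p.1 - p.2) + conj (ψ p.1) * deriv φ (p.1 - p.2)) * F p.2) := by
    apply Continuous.integrable_of_hasCompactSupport
    · apply Continuous.mul _ (hF.comp continuous_snd)
      apply Continuous.add
      · exact ((hconj.comp (hψ'c.comp continuous_fst)).mul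
          (hφc.comp (continuous_fst.sub continuous_snd)))
      · exact ((hconj.comp (hψc.comp continuous_fst)).mul
          (hφ'c.comp (continuous_fst.sub continuous_snd)))
    · apply HasCompactSupport.intro ((isCompact_Icc (a := (0:ℝ)) (b := a)).prod
        (isCompact_Icc (a := -a) (b := a)))
      intro p hp
      by_cases hx : p.1 ∈ tsupport ψ
      · by_cases hv : p.1 - p.2 ∈ tsupport φ
        · exfalso
          apply hp
          have h1' := hψs hx
          have h2' := hφs hv
          simp only [Set.mem_prod, Set.mem_Icc] at *
          constructor
          · exact ⟨le_of_lt h1'.1, le_of_lt h1'.2⟩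
          · constructor <;> nlinarith [h1'.1, h1'.2, h2'.1, h2'.2]
        · obtain ⟨e1, e2⟩ := hmemφ _ hv
          simp [e1, e2]
      · obtain ⟨e1, e2⟩ := hmemψ _ hx
        simp [e1, e2]
  rw [MeasureTheory.integral_integral_swap hInt]
  -- Step 4: inner integral vanishes
  have h2 : ∀ y : ℝ, (∫ x, (conj (deriv ψ x) * φ (x - y) + conj (ψ x) * deriv φ (x - y)) * F y)
      = 0 := by
    intro y
    rw [MeasureTheory.integral_mul_const]
    suffices h : (∫ x, (conj (deriv ψ x) * φ (x - y) + conj (ψ x) * deriv φ (x - y))) = 0 by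
      rw [h, zero_mul]
    set G : ℝ → ℂ := fun x => conj (ψ x) * φ (x - y) with hG
    have hGder : ∀ x, HasDerivAt G
        (conj (deriv ψ x) * φ (x - y) + conj (ψ x) * deriv φ (x - y)) x := by
      intro x
      have hd1 : HasDerivAt (fun x => conj (ψ x)) (conj (deriv ψ x)) x :=
        ((hψ.differentiable (by simp) x).hasDerivAt).star
      have h0 : HasDerivAt (fun z : ℝ => z - y) 1 x := by
        simpa using (hasDerivAt_id x).sub_const y
      have hd2 : HasDerivAt (fun x => φ (x - y)) (deriv φ (x - y)) x :=
        HasDerivAt.comp_sub_const x y ((hφ.differentiable (by simp) (x - y)).hasDerivAt)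
      exact hd1.mul hd2
    have hG'supp : support (fun x => conj (deriv ψ x) * φ (x - y) + conj (ψ x) * deriv φ (x - y))
        ⊆ Set.Ioc (-1 : ℝ) (a + 1) := by
      intro x hx
      have hx1 : x ∈ tsupport ψ := by
        by_contra hc
        obtain ⟨e1, e2⟩ := hmemψ x hc
        apply hx
        simp [e1, e2]
      have hx2 : x ∈ Set.Ioo 0 a := hψs hx1
      exact ⟨by linarith [hx2.1], by linarith [hx2.2]⟩
    rw [← intervalIntegral.integral_eq_integral_of_support_subset hG'supp]
    rw [intervalIntegral.integral_deriv_eq_sub' G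
      (funext fun x => (hGder x).deriv)
      (fun x _ => (hGder x).differentiableAt)
      (((hconj.comp hψ'c).mul (hφc.comp (continuous_id.sub continuous_const))).add
        ((hconj.comp hψc).mul (hφ'c.comp (continuous_id.sub continuous_const)))).continuousOn]
    have e1 : ψ (-1 : ℝ) = 0 := (hmemψ _ (fun h => by have := hψs h; simp at this; linarith [this.1])).1
    have e2 : ψ (a + 1) = 0 := (hmemψ _ (fun h => by have := hψs h; simp at this; linarith [this.2])).1
    simp [hG, e1, e2]
  simp_rw [h2]
  exact integral_zero ℝ ℂ
end

section
/- Let k ∈ ℝ and let h : [0,1/2] → ℂ be twice continuously differentiable, not identically zero, satisfying h''(x) = −k² h(x) for all x ∈ (0,1/2), together with the boundary conditions h'(0) + h'(1/2) = 0 and h(0) + h(1/2) = (3/2) h'(0). Then 3k sin(k/2) = 4(1 + cos(k/2)). These are the eigenvalue equations for the selfadjoint operator T_F⁻¹, the inverse Mercer operator of F(x) = 1 − |x| on L²(0,1/2). -/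
/-!
The quantities `h' t * cos (k t + φ) + k h t * sin (k t + φ)` are constant along solutions, which
yields `k h t = k h 0 cos (k t) + h' 0 sin (k t)` and `h' t = h' 0 cos (k t) - k h 0 sin (k t)`.
At `t = 1/2` the boundary conditions become a homogeneous linear system in `(k h 0, h' 0)` whose
determinant is, by `sin² + cos² = 1`, a multiple of `3 k sin (k/2) - 4 (1 + cos (k/2))`; a
nonzero `h` gives a nonzero solution of the system when `k ≠ 0`. For `k = 0` the function is
affine and the boundary conditions force it to vanish.
-/

open Set Real

theorem constant_of_hasDerivAt_zero_Ioo {E : Type*} [NormedAddCommGroup E] [NormedSpace ℝ E]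
    [CompleteSpace E] {f : ℝ → E} {a b : ℝ} (hc : ContinuousOn f (Icc a b))
    (hd : ∀ x ∈ Ioo a b, HasDerivAt f 0 x) : ∀ t ∈ Icc a b, f t = f a := by
  intro t ht
  have hint := intervalIntegral.integral_eq_sub_of_hasDeriv_right_of_le ht.1
    (hc.mono (Icc_subset_Icc_right ht.2))
    (fun x hx => (hd x ⟨hx.1, hx.2.trans_le ht.2⟩).hasDerivWithinAt) intervalIntegrable_const
  rwa [intervalIntegral.integral_zero, eq_comm, sub_eq_zero] at hint

namespace Oscillator

variable {k L : ℝ} {h h' h'' : ℝ → ℂ}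

theorem phase_invariant (hd1 : ∀ x ∈ Icc 0 L, HasDerivAt h (h' x) x)
    (hd2 : ∀ x ∈ Icc 0 L, HasDerivAt h' (h'' x) x)
    (hode : ∀ x ∈ Ioo 0 L, h'' x = -(k : ℂ) ^ 2 * h x) (φ : ℝ) :
    ∀ t ∈ Icc 0 L, h' t * Real.cos (k * t + φ) + k * h t * Real.sin (k * t + φ) =
      h' 0 * Real.cos φ + k * h 0 * Real.sin φ := by
  set F := fun t : ℝ => h' t * Real.cos (k * t + φ) + k * h t * Real.sin (k * t + φ)
  have hF : ∀ x ∈ Icc 0 L,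
      HasDerivAt F ((h'' x + k ^ 2 * h x) * Real.cos (k * x + φ)) x := by
    intro x hx
    have hφ : HasDerivAt (fun t : ℝ => k * t + φ) k x := by
      simpa using ((hasDerivAt_id x).const_mul k).add_const φ
    have hC := ((Real.hasDerivAt_cos _).comp x hφ).ofReal_comp
    have hS := ((Real.hasDerivAt_sin _).comp x hφ).ofReal_comp
    refine (((hd2 x hx).mul hC).add (((hd1 x hx).const_mul (k : ℂ)).mul hS)).congr_deriv ?_
    simp only [Function.comp_def]
    push_cast
    ring
  have := constant_of_hasDerivAt_zero_Ioo
    (fun x hx => (hF x hx).continuousAt.continuousWithinAt)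
    (fun x hx => by simpa [hode x hx] using hF x (Ioo_subset_Icc_self hx))
  simpa [F] using this

theorem solution_eq (hd1 : ∀ x ∈ Icc 0 L, HasDerivAt h (h' x) x)
    (hd2 : ∀ x ∈ Icc 0 L, HasDerivAt h' (h'' x) x)
    (hode : ∀ x ∈ Ioo 0 L, h'' x = -(k : ℂ) ^ 2 * h x) {t : ℝ} (ht : t ∈ Icc 0 L) :
    h' t = h' 0 * Real.cos (k * t) - k * h 0 * Real.sin (k * t) ∧
      k * h t = k * h 0 * Real.cos (k * t) + h' 0 * Real.sin (k * t) := by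
  have hV := phase_invariant hd1 hd2 hode 0 t ht
  have hW := phase_invariant hd1 hd2 hode (-(π / 2)) t ht
  simp only [add_zero, cos_zero, sin_zero, ← sub_eq_add_neg, cos_sub_pi_div_two,
    sin_sub_pi_div_two, cos_neg, sin_neg, cos_pi_div_two, sin_pi_div_two, Complex.ofReal_zero,
    Complex.ofReal_one, Complex.ofReal_neg] at hV hW
  have hcs : (Real.sin (k * t) : ℂ) ^ 2 + (Real.cos (k * t) : ℂ) ^ 2 = 1 := by
    exact_mod_cast Real.sin_sq_add_cos_sq (k * t)
  constructor
  · linear_combination (Real.cos (k * t) : ℂ) * hV + (Real.sin (k * t) : ℂ) * hW - h' t * hcs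
  · linear_combination (Real.sin (k * t) : ℂ) * hV - (Real.cos (k * t) : ℂ) * hW - k * h t * hcs

theorem eq_zero_of_boundary_of_second_deriv_eq_zero
    (hd1 : ∀ x ∈ Icc 0 (1 / 2 : ℝ), HasDerivAt h (h' x) x)
    (hd2 : ∀ x ∈ Icc 0 (1 / 2 : ℝ), HasDerivAt h' (h'' x) x)
    (hode : ∀ x ∈ Ioo 0 (1 / 2 : ℝ), h'' x = 0)
    (hb1 : h' 0 + h' (1 / 2) = 0) (hb2 : h 0 + h (1 / 2) = (3 / 2 : ℂ) * h' 0) :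
    ∀ t ∈ Icc 0 (1 / 2 : ℝ), h t = 0 := by
  have hhalf : (1 / 2 : ℝ) ∈ Icc (0 : ℝ) (1 / 2) := by norm_num
  have h'_const := constant_of_hasDerivAt_zero_Ioo
    (fun y hy => (hd2 y hy).continuousAt.continuousWithinAt) fun y hy => by
      simpa [hode y hy] using hd2 y (Ioo_subset_Icc_self hy)
  have h'_zero : h' 0 = 0 := by
    linear_combination (hb1 - h'_const _ hhalf) / 2
  have h_const := constant_of_hasDerivAt_zero_Ioo
    (fun y hy => (hd1 y hy).continuousAt.continuousWithinAt) fun y hy => by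
      simpa [h'_const y (Ioo_subset_Icc_self hy), h'_zero] using hd1 y (Ioo_subset_Icc_self hy)
  intro t ht
  linear_combination h_const t ht + (hb2 - h_const _ hhalf + 3 / 2 * h'_zero) / 2

end Oscillator

theorem eigenvalue_eq_of_boundary_system {k θ : ℝ} {u v : ℂ} (huv : u ≠ 0 ∨ v ≠ 0)
    (h1 : v * Real.cos θ - u * Real.sin θ = -v)
    (h2 : u * Real.cos θ + v * Real.sin θ = 3 / 2 * k * v - u) :
    3 * k * Real.sin θ = 4 * (1 + Real.cos θ) := by
  set c := Real.cos θ
  set s := Real.sin θ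
  have hcs : (s : ℂ) ^ 2 + (c : ℂ) ^ 2 = 1 := by exact_mod_cast Real.sin_sq_add_cos_sq θ
  have hD : ((3 * k * s - 4 * (1 + c) : ℝ) : ℂ) = 0 := by
    rcases huv with hu | hv
    · refine (mul_eq_zero.mp ?_).resolve_right hu
      push_cast
      linear_combination (2 * s - 3 * k) * h1 - 2 * (1 + c) * h2 + 2 * u * hcs
    · refine (mul_eq_zero.mp ?_).resolve_right hv
      push_cast
      linear_combination -2 * (1 + c) * h1 - 2 * s * h2 + 2 * v * hcs
  exact_mod_cast sub_eq_zero.mp (by exact_mod_cast hD)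

theorem stmt_9_general (k : ℝ) (h h' h'' : ℝ → ℂ)
    (hd1 : ∀ x ∈ Set.Icc (0:ℝ) (1/2), HasDerivAt h (h' x) x)
    (hd2 : ∀ x ∈ Set.Icc (0:ℝ) (1/2), HasDerivAt h' (h'' x) x)
    (hne : ∃ x ∈ Set.Icc (0:ℝ) (1/2), h x ≠ 0)
    (hode : ∀ x ∈ Set.Ioo (0:ℝ) (1/2), h'' x = -(k : ℂ) ^ 2 * h x)
    (hb1 : h' 0 + h' (1/2) = 0)
    (hb2 : h 0 + h (1/2) = (3/2 : ℂ) * h' 0) :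
    3 * k * Real.sin (k / 2) = 4 * (1 + Real.cos (k / 2)) := by
  obtain ⟨x, hx, hx0⟩ := hne
  rcases eq_or_ne k 0 with rfl | hk
  · exact absurd (Oscillator.eq_zero_of_boundary_of_second_deriv_eq_zero hd1 hd2
      (by simpa using hode) hb1 hb2 x hx) hx0
  obtain ⟨h'_half, h_half⟩ := Oscillator.solution_eq hd1 hd2 hode (t := 1 / 2) (by norm_num)
  rw [show k * (1 / 2) = k / 2 by ring] at h'_half h_half
  refine eigenvalue_eq_of_boundary_system (u := k * h 0) (v := h' 0) ?_
    (by linear_combination hb1 - h'_half) (by linear_combination k * hb2 - h_half)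
  by_contra! huv
  have h_x := (Oscillator.solution_eq hd1 hd2 hode hx).2
  rw [huv.1, huv.2, zero_mul, zero_mul, add_zero] at h_x
  exact hx0 ((mul_eq_zero.mp h_x).resolve_left (Complex.ofReal_ne_zero.mpr hk))

theorem stmt_9 (k : ℝ) (h h' h'' : ℝ → ℂ)
    (hd1 : ∀ x ∈ Set.Icc (0:ℝ) (1/2), HasDerivAt h (h' x) x)
    (hd2 : ∀ x ∈ Set.Icc (0:ℝ) (1/2), HasDerivAt h' (h'' x) x)
    (hcont : ContinuousOn h'' (Set.Icc (0:ℝ) (1/2)))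
    (hne : ∃ x ∈ Set.Icc (0:ℝ) (1/2), h x ≠ 0)
    (hode : ∀ x ∈ Set.Ioo (0:ℝ) (1/2), h'' x = -(k : ℂ) ^ 2 * h x)
    (hb1 : h' 0 + h' (1/2) = 0)
    (hb2 : h 0 + h (1/2) = (3/2 : ℂ) * h' 0) :
    3 * k * Real.sin (k / 2) = 4 * (1 + Real.cos (k / 2)) :=
  stmt_9_general k h h' h'' hd1 hd2 hne hode hb1 hb2
end

section
/- Define the sesquilinear form B(h,k) = (1/2)( ∫₀¹ conj(h(x)) k(x) dx + ∫₀¹ conj(h'(x)) k'(x) dx ) + (1/2)( conj(h(0)) k(0) + conj(h(1)) k(1) ) for continuously differentiable h, k : [0,1] → ℂ. Fix θ ∈ ℝ and suppose λ, μ ∈ ℝ with λ ≠ μ satisfy (1 + iλ) e^{iλ} = e^{iθ}(1 − iλ) and (1 + iμ) e^{iμ} = e^{iθ}(1 − iμ). Then B(e_λ, e_μ) = 0, where e_λ(x) = e^{iλx} and e_μ(x) = e^{iμx}. (Thus distinct eigenvalues of the selfadjoint extension A_θ give orthogonal exponentials in the RKHS H_F of F(x) = e^{−|x|}.) -/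
/-!
With `c = i(μ - λ)` the integrands of `B(e_λ, e_μ)` are `e^{cx}` and `λμ e^{cx}`, so
`2 B(e_λ, e_μ) = (1 + λμ)(e^c - 1)/c + (1 + e^c)`. Eliminating `e^{iθ}` between the two spectral
conditions gives `e^c (1 - iλ)(1 + iμ) = (1 + iλ)(1 - iμ)`, and with `a = iλ`, `b = iμ` the
numerator `(1 - ab)(e^c - 1) + c(1 + e^c)` is exactly `e^c (1 - a)(1 + b) - (1 + a)(1 - b)`.
-/

open MeasureTheory ComplexConjugate Complex

namespace ExpKernelRKHS

noncomputable def rkhsInner (h k : ℝ → ℂ) : ℂ :=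
  (1/2 : ℂ) * ((∫ x in (0:ℝ)..1, conj (h x) * k x) +
      (∫ x in (0:ℝ)..1, conj (deriv h x) * deriv k x)) +
    (1/2 : ℂ) * (conj (h 0) * k 0 + conj (h 1) * k 1)

noncomputable def expI (lam : ℝ) : ℝ → ℂ := fun t => exp (I * lam * t)

lemma hasDerivAt_expI (lam x : ℝ) : HasDerivAt (expI lam) (I * lam * expI lam x) x := by
  have h := ((hasDerivAt_id (x : ℂ)).const_mul (I * lam)).comp_ofReal.cexp
  rw [mul_one, mul_comm (cexp _)] at h
  exact h

lemma conj_expI_mul_expI (lam mu x : ℝ) :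
    conj (expI lam x) * expI mu x = exp (I * (mu - lam) * x) := by
  rw [expI, expI, ← exp_conj, ← exp_add]
  congr 1
  simp only [map_mul, conj_I, conj_ofReal]
  ring

lemma conj_deriv_expI_mul_deriv_expI (lam mu x : ℝ) :
    conj (deriv (expI lam) x) * deriv (expI mu) x = lam * mu * exp (I * (mu - lam) * x) := by
  rw [(hasDerivAt_expI lam x).deriv, (hasDerivAt_expI mu x).deriv, ← conj_expI_mul_expI]
  simp only [map_mul, conj_I, conj_ofReal]
  linear_combination (-(lam : ℂ) * mu * conj (expI lam x) * expI mu x) * I_sq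

lemma rkhsInner_expI (lam mu : ℝ) (hne : lam ≠ mu) :
    rkhsInner (expI lam) (expI mu) = (1/2 : ℂ) *
      ((1 + lam * mu) * ((exp (I * (mu - lam)) - 1) / (I * (mu - lam))) +
        (1 + exp (I * (mu - lam)))) := by
  have hc : I * ((mu : ℂ) - lam) ≠ 0 :=
    mul_ne_zero I_ne_zero (sub_ne_zero.mpr (ofReal_injective.ne hne.symm))
  simp only [rkhsInner, conj_expI_mul_expI, conj_deriv_expI_mul_deriv_expI,
    intervalIntegral.integral_const_mul, integral_exp_mul_complex hc]
  simp only [ofReal_zero, ofReal_one, mul_zero, mul_one, exp_zero]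
  ring

/-- Eliminating the common factor `w` (standing for `e^{iθ}`) from two spectral conditions. -/
lemma exp_sub_mul_eq_of_spectral {a b w : ℂ}
    (ha : (1 + a) * exp a = w * (1 - a)) (hb : (1 + b) * exp b = w * (1 - b)) :
    exp (b - a) * ((1 - a) * (1 + b)) = (1 + a) * (1 - b) := by
  have hcross : exp b * ((1 - a) * (1 + b)) = exp a * ((1 + a) * (1 - b)) := by
    linear_combination (1 - a) * hb - (1 - b) * ha
  rw [exp_sub, div_mul_eq_mul_div, hcross, mul_div_cancel_left₀ _ (exp_ne_zero a)]

end ExpKernelRKHS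

open ExpKernelRKHS

theorem stmt_12 (θ lam mu : ℝ) (hne : lam ≠ mu)
    (hlam : (1 + Complex.I * lam) * Complex.exp (Complex.I * lam) =
      Complex.exp (Complex.I * θ) * (1 - Complex.I * lam))
    (hmu : (1 + Complex.I * mu) * Complex.exp (Complex.I * mu) =
      Complex.exp (Complex.I * θ) * (1 - Complex.I * mu)) :
    (1/2 : ℂ) * ((∫ x in (0:ℝ)..1,
        conj (Complex.exp (Complex.I * lam * x)) * Complex.exp (Complex.I * mu * x)) +
      (∫ x in (0:ℝ)..1,
        conj (deriv (fun t : ℝ => Complex.exp (Complex.I * lam * t)) x) *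
          deriv (fun t : ℝ => Complex.exp (Complex.I * mu * t)) x)) +
    (1/2 : ℂ) * (conj (Complex.exp (Complex.I * lam * ((0:ℝ):ℂ))) *
        Complex.exp (Complex.I * mu * ((0:ℝ):ℂ)) +
      conj (Complex.exp (Complex.I * lam * ((1:ℝ):ℂ))) *
        Complex.exp (Complex.I * mu * ((1:ℝ):ℂ))) = 0 := by
  change rkhsInner (expI lam) (expI mu) = 0
  have hc : I * ((mu : ℂ) - lam) ≠ 0 :=
    mul_ne_zero I_ne_zero (sub_ne_zero.mpr (ofReal_injective.ne hne.symm))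
  have hnum : (1 + lam * mu) * (exp (I * (mu - lam)) - 1) =
      -(I * (mu - lam)) * (1 + exp (I * (mu - lam))) := by
    have hexp := exp_sub_mul_eq_of_spectral hlam hmu
    rw [← mul_sub] at hexp
    linear_combination hexp + (lam * mu * (exp (I * (mu - lam)) - 1)) * I_sq
  rw [rkhsInner_expI lam mu hne, mul_div_assoc', hnum, neg_mul, neg_div,
    mul_div_cancel_left₀ _ hc, neg_add_cancel, mul_zero]
end

section
/- Let F(x) = e^{−|x|}. For every complex number z there exists a finite constant C ≥ 0 such that for all smooth functions φ compactly supported in (0,1): | ∫₀¹ e^{zx} φ(x) dx |² ≤ C · ∫₀¹∫₀¹ conj(φ(x)) φ(y) e^{−|x−y|} dx dy (the double integral being a nonnegative real number). (This is the criterion showing that the function e_z(x) = e^{zx} belongs to the RKHS H_F of F on (−1,1), for every z ∈ ℂ.) -/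
open MeasureTheory ComplexConjugate intervalIntegral
open scoped ComplexOrder

set_option maxHeartbeats 1000000 in
theorem stmt_14 (z : ℂ) :
    ∃ C : ℝ, 0 ≤ C ∧
      ∀ φ : ℝ → ℂ, ContDiff ℝ (⊤ : ℕ∞) φ → tsupport φ ⊆ Set.Ioo 0 1 →
        ((‖∫ x in (0:ℝ)..1, Complex.exp (z * x) * φ x‖ ^ 2 : ℝ) : ℂ) ≤
          (C : ℂ) * ∫ x in (0:ℝ)..1, ∫ y in (0:ℝ)..1,
            conj (φ x) * φ y * Complex.exp (-(|x - y| : ℝ)) := by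
  refine ⟨(1 + ‖z‖) ^ 2 * Real.exp (2 * ‖z‖) + 2, by positivity, ?_⟩
  intro φ hφ hsupp
  have hφc : Continuous φ := hφ.continuous
  -- the auxiliary function g
  set f : ℝ → ℂ := fun x => Complex.exp (-(x:ℂ)) * φ x with hfdef
  have hfc : Continuous f := (Complex.continuous_exp.comp (by continuity)).mul hφc
  set g : ℝ → ℂ := fun t => Complex.exp (t:ℂ) * ∫ x in t..(1:ℝ), f x with hgdef
  have hee : ∀ t : ℝ, Complex.exp (t:ℂ) * Complex.exp (-(t:ℂ)) = 1 := by
    intro t; rw [← Complex.exp_add]; simp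
  have hg' : ∀ t : ℝ, HasDerivAt g (g t - φ t) t := by
    intro t
    have h1 : HasDerivAt (fun t : ℝ => Complex.exp (t:ℂ)) (Complex.exp t) t :=
      (Complex.hasDerivAt_exp (t:ℂ)).comp_ofReal
    have h2 : HasDerivAt (fun u : ℝ => ∫ x in u..(1:ℝ), f x) (-(f t)) t :=
      integral_hasDerivAt_left (hfc.intervalIntegrable _ _)
        (hfc.stronglyMeasurableAtFilter _ _) hfc.continuousAt
    have hmul := h1.mul h2
    refine hmul.congr_deriv (Eq.symm ?_)
    simp only [hfdef]
    rw [mul_neg, ← mul_assoc, hee, one_mul]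
    ring
  have hgc : Continuous g := Differentiable.continuous (fun t => (hg' t).differentiableAt)
  have hg1 : g 1 = 0 := by simp [hgdef]
  set g0 : ℂ := g 0 with hg0def
  -- G: primitive of exp * g
  set G : ℝ → ℂ := fun x => ∫ y in (0:ℝ)..x, Complex.exp (y:ℂ) * g y with hGdef
  have hegc : Continuous fun y : ℝ => Complex.exp (y:ℂ) * g y :=
    (Complex.continuous_exp.comp (by continuity)).mul hgc
  have hG' : ∀ x : ℝ, HasDerivAt G (Complex.exp (x:ℂ) * g x) x := fun x =>
    integral_hasDerivAt_right (hegc.intervalIntegrable _ _)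
      (hegc.stronglyMeasurableAtFilter _ _) hegc.continuousAt
  have hGc : Continuous G := Differentiable.continuous (fun t => (hG' t).differentiableAt)
  have hG0 : G 0 = 0 := integral_same
  -- Step B1 : primitive of exp * φ
  have key1 : ∀ x : ℝ, (∫ y in (0:ℝ)..x, Complex.exp (y:ℂ) * φ y)
      = 2 * G x - Complex.exp (x:ℂ) * g x + g0 := by
    intro x
    have hK' : ∀ y : ℝ, HasDerivAt (fun y : ℝ => 2 * G y - Complex.exp (y:ℂ) * g y)
        (Complex.exp (y:ℂ) * φ y) y := by
      intro y
      have h1 : HasDerivAt (fun y : ℝ => Complex.exp (y:ℂ)) (Complex.exp y) y :=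
        (Complex.hasDerivAt_exp (y:ℂ)).comp_ofReal
      have := ((hG' y).const_mul (2:ℂ)).sub (h1.mul (hg' y))
      refine this.congr_deriv (Eq.symm ?_)
      ring
    have hcont : Continuous fun y : ℝ => Complex.exp (y:ℂ) * φ y :=
      (Complex.continuous_exp.comp (by continuity)).mul hφc
    have := integral_eq_sub_of_hasDerivAt (f := fun y : ℝ => 2 * G y - Complex.exp (y:ℂ) * g y)
      (fun y _ => hK' y) (hcont.intervalIntegrable 0 x)
    rw [this]
    show 2 * G x - Complex.exp (x:ℂ) * g x - (2 * G 0 - Complex.exp ((0:ℝ):ℂ) * g 0)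
        = 2 * G x - Complex.exp (x:ℂ) * g x + g0
    rw [hG0, ← hg0def]
    push_cast
    rw [Complex.exp_zero]
    ring
  -- Step B2 : the inner integral
  set W : ℝ → ℂ := fun x => Complex.exp (-(x:ℂ)) * (2 * G x + g0) with hWdef
  have hWc : Continuous W :=
    ((Complex.continuous_exp.comp (by continuity)).mul
      ((continuous_const.mul hGc).add continuous_const))
  have hu : ∀ x ∈ Set.Icc (0:ℝ) 1,
      (∫ y in (0:ℝ)..1, φ y * Complex.exp (-(|x - y| : ℝ))) = W x := by
    rintro x ⟨hx0, hx1⟩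
    have habs : Continuous fun y : ℝ => ((|x - y| : ℝ) : ℂ) :=
      Complex.continuous_ofReal.comp ((continuous_const.sub continuous_id).abs)
    have hcont : Continuous fun y : ℝ => φ y * Complex.exp (-(|x - y| : ℝ)) :=
      hφc.mul (Complex.continuous_exp.comp habs.neg)
    have hsplit := integral_add_adjacent_intervals (μ := volume) (a := (0:ℝ)) (b := x) (c := 1)
      (hcont.intervalIntegrable _ _) (hcont.intervalIntegrable _ _)
    have hP1 : (∫ y in (0:ℝ)..x, φ y * Complex.exp (-(|x - y| : ℝ)))
        = Complex.exp (-(x:ℂ)) * (2 * G x + g0) - g x := by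
      have hcongr : Set.EqOn (fun y : ℝ => φ y * Complex.exp (-(|x - y| : ℝ)))
          (fun y : ℝ => Complex.exp (-(x:ℂ)) * (Complex.exp (y:ℂ) * φ y)) (Set.uIcc 0 x) := by
        intro y hy
        rw [Set.uIcc_of_le hx0] at hy
        have h1 : |x - y| = x - y := abs_of_nonneg (by linarith [hy.2])
        simp only [h1]
        push_cast
        rw [← mul_assoc, ← Complex.exp_add, neg_sub, neg_add_eq_sub]
        ring
      rw [intervalIntegral.integral_congr hcongr, intervalIntegral.integral_const_mul, key1 x]
      linear_combination (-(g x)) * hee x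
    have hP2 : (∫ y in x..(1:ℝ), φ y * Complex.exp (-(|x - y| : ℝ))) = g x := by
      have hcongr : Set.EqOn (fun y : ℝ => φ y * Complex.exp (-(|x - y| : ℝ)))
          (fun y : ℝ => Complex.exp (x:ℂ) * f y) (Set.uIcc x 1) := by
        intro y hy
        rw [Set.uIcc_of_le hx1] at hy
        have h1 : |x - y| = y - x := by
          rw [abs_sub_comm]; exact abs_of_nonneg (by linarith [hy.1])
        simp only [h1, hfdef]
        push_cast
        rw [← mul_assoc, ← Complex.exp_add, ← sub_eq_add_neg, neg_sub]
        ring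
      rw [intervalIntegral.integral_congr hcongr, intervalIntegral.integral_const_mul, hgdef]
    rw [← hsplit, hP1, hP2, hWdef]
    ring
  -- Step B3 : evaluation of the double integral
  have hW' : ∀ x : ℝ, HasDerivAt W (2 * g x - W x) x := by
    intro x
    have h0 : HasDerivAt (fun w : ℂ => Complex.exp (-w)) (-Complex.exp (-(x:ℂ))) (x:ℂ) := by
      simpa [Function.comp_def] using (Complex.hasDerivAt_exp (-(x:ℂ))).comp (x:ℂ) (hasDerivAt_neg (x:ℂ))
    have h1 : HasDerivAt (fun y : ℝ => Complex.exp (-(y:ℂ))) (-Complex.exp (-(x:ℂ))) x :=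
      h0.comp_ofReal
    have h2 : HasDerivAt (fun y : ℝ => 2 * G y + g0) (2 * (Complex.exp (x:ℂ) * g x)) x :=
      ((hG' x).const_mul (2:ℂ)).add_const g0
    have := h1.mul h2
    refine this.congr_deriv (Eq.symm ?_)
    simp only [hWdef]
    linear_combination (-2 * g x) * hee x
  have hgbc : Continuous fun x : ℝ => conj (g x) := Complex.continuous_conj.comp hgc
  have hΨ' : ∀ x : ℝ, HasDerivAt (fun x : ℝ => conj (g x) * W x)
      (2 * (conj (g x) * g x) - conj (φ x) * W x) x := by
    intro x
    have h1 : HasDerivAt (fun x : ℝ => conj (g x)) (conj (g x - φ x)) x := by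
      simpa only [starRingEnd_apply] using (hg' x).star
    have := h1.mul (hW' x)
    refine this.congr_deriv (Eq.symm ?_)
    rw [map_sub]
    ring
  have hQ2 : (∫ x in (0:ℝ)..1, conj (φ x) * W x)
      = conj g0 * g0 + 2 * ∫ x in (0:ℝ)..1, conj (g x) * g x := by
    have hint1 : IntervalIntegrable (fun x : ℝ => 2 * (conj (g x) * g x)) volume 0 1 :=
      ((continuous_const.mul (hgbc.mul hgc))).intervalIntegrable _ _
    have hint2 : IntervalIntegrable (fun x : ℝ => conj (φ x) * W x) volume 0 1 :=
      ((Complex.continuous_conj.comp hφc).mul hWc).intervalIntegrable _ _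
    have hftc := integral_eq_sub_of_hasDerivAt (f := fun x : ℝ => conj (g x) * W x)
      (fun x _ => hΨ' x) (hint1.sub hint2)
    rw [intervalIntegral.integral_sub hint1 hint2] at hftc
    have hW0 : W 0 = g0 := by
      simp only [hWdef, hG0]
      push_cast
      rw [neg_zero, Complex.exp_zero]
      ring
    simp only [hg1, map_zero, zero_mul, zero_sub, hW0, ← hg0def,
      intervalIntegral.integral_const_mul] at hftc
    linear_combination -hftc
  -- outer congruence
  have hQ : (∫ x in (0:ℝ)..1, ∫ y in (0:ℝ)..1, conj (φ x) * φ y * Complex.exp (-(|x - y| : ℝ)))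
      = conj g0 * g0 + 2 * ∫ x in (0:ℝ)..1, conj (g x) * g x := by
    rw [← hQ2]
    apply intervalIntegral.integral_congr
    intro x hx
    rw [Set.uIcc_of_le (by norm_num : (0:ℝ) ≤ 1)] at hx
    have : (∫ y in (0:ℝ)..1, conj (φ x) * φ y * Complex.exp (-(|x - y| : ℝ)))
        = conj (φ x) * ∫ y in (0:ℝ)..1, φ y * Complex.exp (-(|x - y| : ℝ)) := by
      rw [← intervalIntegral.integral_const_mul]
      congr 1
      ext y
      ring
    simp only [this, hu x hx]
  -- pass to real numbers
  have hQreal : (∫ x in (0:ℝ)..1, ∫ y in (0:ℝ)..1,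
        conj (φ x) * φ y * Complex.exp (-(|x - y| : ℝ)))
      = ((Complex.normSq g0 + 2 * ∫ x in (0:ℝ)..1, Complex.normSq (g x) : ℝ) : ℂ) := by
    rw [hQ]
    have h1 : (∫ x in (0:ℝ)..1, conj (g x) * g x)
        = ((∫ x in (0:ℝ)..1, Complex.normSq (g x) : ℝ) : ℂ) := by
      rw [← intervalIntegral.integral_ofReal]
      congr 1
      ext x
      rw [← Complex.normSq_eq_conj_mul_self]
    rw [h1, ← Complex.normSq_eq_conj_mul_self]
    push_cast
    ring
  rw [hQreal]
  -- Identity A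
  set J : ℂ := ∫ x in (0:ℝ)..1, Complex.exp (z * x) * g x with hJdef
  have hzc : Continuous fun x : ℝ => Complex.exp (z * x) :=
    Complex.continuous_exp.comp (continuous_const.mul Complex.continuous_ofReal)
  have hI : (∫ x in (0:ℝ)..1, Complex.exp (z * x) * φ x) = (1 + z) * J + g0 := by
    have hΦ' : ∀ x : ℝ, HasDerivAt (fun x : ℝ => Complex.exp (z * x) * g x)
        ((1 + z) * (Complex.exp (z * x) * g x) - Complex.exp (z * x) * φ x) x := by
      intro x
      have h0 : HasDerivAt (fun w : ℂ => Complex.exp (z * w)) (Complex.exp (z * x) * z) (x:ℂ) :=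
        (Complex.hasDerivAt_exp _).comp (x:ℂ) (by simpa using (hasDerivAt_id (x:ℂ)).const_mul z)
      have h1 : HasDerivAt (fun x : ℝ => Complex.exp (z * x)) (Complex.exp (z * x) * z) x :=
        h0.comp_ofReal
      have := h1.mul (hg' x)
      refine this.congr_deriv (Eq.symm ?_)
      ring
    have hint1 : IntervalIntegrable (fun x : ℝ => (1 + z) * (Complex.exp (z * x) * g x))
        volume 0 1 := (continuous_const.mul (hzc.mul hgc)).intervalIntegrable _ _
    have hint2 : IntervalIntegrable (fun x : ℝ => Complex.exp (z * x) * φ x) volume 0 1 :=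
      (hzc.mul hφc).intervalIntegrable _ _
    have hftc := integral_eq_sub_of_hasDerivAt (f := fun x : ℝ => Complex.exp (z * x) * g x)
      (fun x _ => hΦ' x) (hint1.sub hint2)
    rw [intervalIntegral.integral_sub hint1 hint2, intervalIntegral.integral_const_mul] at hftc
    simp only [hg1, mul_zero, Complex.ofReal_zero, Complex.ofReal_one, zero_sub,
      Complex.exp_zero, one_mul, ← hg0def] at hftc
    rw [← hJdef] at hftc
    linear_combination -hftc
  -- real estimates
  set N : ℝ := ∫ x in (0:ℝ)..1, Complex.normSq (g x) with hNdef
  set c : ℝ := ∫ x in (0:ℝ)..1, ‖g x‖ with hcdef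
  have hgabs : Continuous fun x : ℝ => ‖g x‖ := continuous_norm.comp hgc
  have hN0 : 0 ≤ N := intervalIntegral.integral_nonneg (by norm_num)
    (fun x _ => Complex.normSq_nonneg _)
  have hCS : c ^ 2 ≤ N := by
    have hint1 : IntervalIntegrable (fun x : ℝ => ‖g x‖ ^ 2) volume 0 1 :=
      (hgabs.pow 2).intervalIntegrable _ _
    have hint2 : IntervalIntegrable (fun x : ℝ => 2 * c * ‖g x‖) volume 0 1 :=
      (continuous_const.mul hgabs).intervalIntegrable _ _
    have hexp : (∫ x in (0:ℝ)..1, (‖g x‖ - c) ^ 2) = N - c ^ 2 := by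
      have : (fun x : ℝ => (‖g x‖ - c) ^ 2)
          = fun x : ℝ => ‖g x‖ ^ 2 - 2 * c * ‖g x‖ + c ^ 2 := by
        ext x; ring
      rw [this]
      rw [intervalIntegral.integral_add (hint1.sub hint2) (intervalIntegrable_const),
        intervalIntegral.integral_sub hint1 hint2,
        intervalIntegral.integral_const_mul, intervalIntegral.integral_const]
      have hNe : (∫ x in (0:ℝ)..1, ‖g x‖ ^ 2) = N := by
        rw [hNdef]; congr 1; ext x; rw [Complex.sq_norm]
      rw [hNe, ← hcdef]
      simp only [smul_eq_mul, sub_zero]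
      ring
    have hnn : 0 ≤ ∫ x in (0:ℝ)..1, (‖g x‖ - c) ^ 2 :=
      intervalIntegral.integral_nonneg (by norm_num) (fun x _ => sq_nonneg _)
    linarith [hexp ▸ hnn]
  have hc0 : 0 ≤ c := intervalIntegral.integral_nonneg (by norm_num)
    (fun x _ => norm_nonneg _)
  have hJbound : ‖J‖ ≤ Real.exp (‖z‖) * c := by
    have h1 : ‖J‖ ≤ ∫ x in (0:ℝ)..1, ‖Complex.exp (z * x) * g x‖ := by
      simpa using
        intervalIntegral.norm_integral_le_integral_norm (f := fun x : ℝ => Complex.exp (z * x) * g x)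
          (by norm_num : (0:ℝ) ≤ 1)
    refine h1.trans ?_
    have h2 : (∫ x in (0:ℝ)..1, ‖Complex.exp (z * x) * g x‖)
        ≤ ∫ x in (0:ℝ)..1, Real.exp (‖z‖) * ‖g x‖ := by
      apply intervalIntegral.integral_mono_on (by norm_num)
      · exact ((continuous_norm.comp (hzc.mul hgc))).intervalIntegrable _ _
      · exact (continuous_const.mul hgabs).intervalIntegrable _ _
      · intro x hx
        rw [norm_mul]
        apply mul_le_mul_of_nonneg_right _ (norm_nonneg _)
        rw [Complex.norm_exp]
        apply Real.exp_le_exp.mpr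
        have : (z * (x:ℂ)).re = z.re * x := by simp [Complex.mul_re]
        rw [this]
        calc z.re * x ≤ |z.re * x| := le_abs_self _
          _ = |z.re| * |x| := abs_mul _ _
          _ ≤ ‖z‖ * 1 := by
              apply mul_le_mul (Complex.abs_re_le_norm z) _ (abs_nonneg _) (norm_nonneg _)
              rw [abs_of_nonneg hx.1]; exact hx.2
          _ = ‖z‖ := mul_one _
    refine h2.trans ?_
    rw [intervalIntegral.integral_const_mul]
  -- final inequality over ℝ
  set Cz : ℝ := (1 + ‖z‖) ^ 2 * Real.exp (2 * ‖z‖) + 2 with hCzdef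
  have hmain : ‖∫ x in (0:ℝ)..1, Complex.exp (z * x) * φ x‖ ^ 2
      ≤ Cz * (Complex.normSq g0 + 2 * N) := by
    rw [hI]
    have habs : ‖(1 + z) * J + g0‖ ≤ (1 + ‖z‖) * ‖J‖
        + ‖g0‖ := by
      refine (norm_add_le _ _).trans ?_
      apply add_le_add_left
      rw [norm_mul]
      apply mul_le_mul_of_nonneg_right _ (norm_nonneg _)
      calc ‖1 + z‖ ≤ ‖1‖ + ‖z‖ := norm_add_le _ _
        _ = 1 + ‖z‖ := by rw [norm_one]
    have h2 : ‖(1 + z) * J + g0‖ ^ 2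
        ≤ 2 * ((1 + ‖z‖) * ‖J‖) ^ 2 + 2 * ‖g0‖ ^ 2 := by
      have := sq_nonneg ((1 + ‖z‖) * ‖J‖ - ‖g0‖)
      have h3 : ‖(1 + z) * J + g0‖ ^ 2
          ≤ ((1 + ‖z‖) * ‖J‖ + ‖g0‖) ^ 2 := by
        apply sq_le_sq' _ habs
        have := norm_nonneg ((1 + z) * J + g0)
        nlinarith [norm_nonneg ((1+z)*J + g0), norm_nonneg J,
          norm_nonneg g0, norm_nonneg z]
      nlinarith
    refine h2.trans ?_
    have hJ2 : ((1 + ‖z‖) * ‖J‖) ^ 2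
        ≤ (1 + ‖z‖) ^ 2 * Real.exp (2 * ‖z‖) * N := by
      have h4 : ‖J‖ ^ 2 ≤ (Real.exp (‖z‖) * c) ^ 2 := by
        apply sq_le_sq' _ hJbound
        have := norm_nonneg J
        nlinarith [Real.exp_pos (‖z‖), hc0]
      have h5 : (Real.exp (‖z‖) * c) ^ 2
          = Real.exp (2 * ‖z‖) * c ^ 2 := by
        rw [mul_pow, pow_two (Real.exp (‖z‖)), ← Real.exp_add, two_mul]
      calc ((1 + ‖z‖) * ‖J‖) ^ 2
          = (1 + ‖z‖) ^ 2 * ‖J‖ ^ 2 := by ring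
        _ ≤ (1 + ‖z‖) ^ 2 * (Real.exp (2 * ‖z‖) * c ^ 2) := by
            rw [← h5]; exact mul_le_mul_of_nonneg_left h4 (by positivity)
        _ ≤ (1 + ‖z‖) ^ 2 * (Real.exp (2 * ‖z‖) * N) := by
            apply mul_le_mul_of_nonneg_left _ (by positivity)
            exact mul_le_mul_of_nonneg_left hCS (Real.exp_pos _).le
        _ = (1 + ‖z‖) ^ 2 * Real.exp (2 * ‖z‖) * N := by ring
    have hg0sq : ‖g0‖ ^ 2 = Complex.normSq g0 := Complex.sq_norm g0
    have hnsq : 0 ≤ Complex.normSq g0 := Complex.normSq_nonneg _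
    have hfac : 0 ≤ (1 + ‖z‖) ^ 2 * Real.exp (2 * ‖z‖) := by positivity
    nlinarith [hJ2]
  calc ((‖∫ x in (0:ℝ)..1, Complex.exp (z * x) * φ x‖ ^ 2 : ℝ) : ℂ)
      ≤ ((Cz * (Complex.normSq g0 + 2 * N) : ℝ) : ℂ) := Complex.real_le_real.mpr hmain
    _ = (Cz : ℂ) * ((Complex.normSq g0 + 2 * N : ℝ) : ℂ) := by push_cast; ring
end

section
/- Let F(x) = 1 − |x|. Let h : [0,1/2] → ℂ be continuous and suppose there is g ∈ L²(0,1/2) with h(x) = h(0) + ∫₀ˣ g(t) dt for all x ∈ [0,1/2]. Then there exists a finite constant C ≥ 0 such that for all smooth functions φ compactly supported in (0,1/2): | ∫₀^{1/2} conj(h(x)) φ(x) dx |² ≤ C · ∫₀^{1/2}∫₀^{1/2} conj(φ(x)) φ(y) (1 − |x−y|) dx dy. (This shows every continuous function on [0,1/2] with square-integrable derivative belongs to the RKHS H_F of F(x) = 1 − |x| on (−1/2,1/2); in particular e^{±x} ∈ H_F, so the operator D_F has deficiency indices (1,1).) -/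
open MeasureTheory ComplexConjugate Set
open scoped ComplexOrder

namespace Stmt16Aux

noncomputable section

/-- indicator of `x ≤ t` -/
def e (t x : ℝ) : ℂ := if x ≤ t then 1 else 0
/-- indicator of `t < x` -/
def f (t x : ℝ) : ℂ := if t < x then 1 else 0

lemma norm_e_le_one (t x : ℝ) : ‖e t x‖ ≤ 1 := by
  unfold e; split_ifs <;> simp

lemma norm_f_le_one (t x : ℝ) : ‖f t x‖ ≤ 1 := by
  unfold f; split_ifs <;> simp

lemma conj_e (t x : ℝ) : conj (e t x) = e t x := by
  unfold e; split_ifs <;> simp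

lemma conj_f (t x : ℝ) : conj (f t x) = f t x := by
  unfold f; split_ifs <;> simp

lemma e_add_f (t x : ℝ) : e t x + f t x = 1 := by
  unfold e f
  rcases le_or_gt x t with hle | hlt
  · simp [hle, not_lt.2 hle]
  · simp [not_le.2 hlt, hlt]

lemma measurable_e_comp {α : Type*} [MeasurableSpace α] {a b : α → ℝ}
    (ha : Measurable a) (hb : Measurable b) : Measurable fun z => e (a z) (b z) :=
  Measurable.ite (measurableSet_le hb ha) measurable_const measurable_const

lemma measurable_f_comp {α : Type*} [MeasurableSpace α] {a b : α → ℝ}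
    (ha : Measurable a) (hb : Measurable b) : Measurable fun z => f (a z) (b z) :=
  Measurable.ite (measurableSet_lt ha hb) measurable_const measurable_const

/-- The source interval `(0, 1/2)`. -/
abbrev S : Set ℝ := Set.Ioo 0 (1/2)
/-- The parameter interval `(0, 1)`. -/
abbrev T : Set ℝ := Set.Ioo 0 1

lemma measurableSet_S : MeasurableSet S := measurableSet_Ioo
lemma measurableSet_T : MeasurableSet T := measurableSet_Ioo

lemma volume_S : volume S = ENNReal.ofReal (1/2) := by
  simp [S, Real.volume_Ioo]

lemma volume_S_ne_top : volume S ≠ ⊤ := by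
  rw [volume_S]; exact ENNReal.ofReal_ne_top

lemma volume_T_ne_top : volume T ≠ ⊤ := by
  simp [T, Real.volume_Ioo]

instance : IsFiniteMeasure (volume.restrict S) :=
  ⟨by rw [Measure.restrict_apply_univ]; exact volume_S_ne_top.lt_top⟩

instance : IsFiniteMeasure (volume.restrict T) :=
  ⟨by rw [Measure.restrict_apply_univ]; exact volume_T_ne_top.lt_top⟩

section kernel

lemma indicator_integral (m : ℝ) (hm0 : 0 < m) (hm1 : m < 1) :
    (∫ t in T, (Set.Ici m).indicator (fun _ => (1:ℂ)) t) = ((1 - m : ℝ) : ℂ) := by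
  rw [setIntegral_indicator measurableSet_Ici]
  have hset : T ∩ Set.Ici m = Set.Ico m 1 := by
    ext t
    constructor
    · rintro ⟨⟨h1, h2⟩, h3⟩; exact ⟨h3, h2⟩
    · rintro ⟨h1, h2⟩; exact ⟨⟨lt_of_lt_of_le hm0 h1, h2⟩, h1⟩
  rw [hset, setIntegral_const]
  rw [measureReal_def, Real.volume_Ico, ENNReal.toReal_ofReal (by linarith)]
  simp

lemma indicator_integral' (m : ℝ) (hm0 : 0 < m) (hm1 : m < 1) :
    (∫ t in T, (Set.Iio m).indicator (fun _ => (1:ℂ)) t) = ((m : ℝ) : ℂ) := by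
  rw [setIntegral_indicator measurableSet_Iio]
  have hset : T ∩ Set.Iio m = Set.Ioo 0 m := by
    ext t
    constructor
    · rintro ⟨⟨h1, h2⟩, h3⟩; exact ⟨h1, h3⟩
    · rintro ⟨h1, h2⟩; exact ⟨⟨h1, h2.trans hm1⟩, h2⟩
  rw [hset, setIntegral_const]
  rw [measureReal_def, Real.volume_Ioo, ENNReal.toReal_ofReal (by linarith)]
  simp

lemma kernel_eq_of_le {x y : ℝ} (hx : 0 < x) (hxy : x ≤ y) (hy : y < 1) :
    (∫ t in T, (e t x * e t y + f t x * f t y)) = ((1 - (y - x) : ℝ) : ℂ) := by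
  have hfun : (fun t => e t x * e t y + f t x * f t y)
      = fun t => (Set.Ici y).indicator (fun _ => (1:ℂ)) t
        + (Set.Iio x).indicator (fun _ => (1:ℂ)) t := by
    funext t
    unfold e f
    rcases le_or_gt y t with h1 | h1
    · have h2 : x ≤ t := hxy.trans h1
      simp [Set.indicator_apply, h1, h2, not_lt.2 h2]
    · rcases le_or_gt x t with h2 | h2
      · simp [Set.indicator_apply, not_le.2 h1, h1, not_lt.2 h2, h2]
      · simp [Set.indicator_apply, not_le.2 h1, h1, h2, not_le.2 (h2.trans_le hxy),
          h2.trans_le hxy]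
  rw [hfun, integral_add ((integrable_const (1:ℂ)).indicator measurableSet_Ici)
      ((integrable_const (1:ℂ)).indicator measurableSet_Iio),
    indicator_integral y (lt_of_lt_of_le hx hxy) hy,
    indicator_integral' x hx (lt_of_le_of_lt hxy hy)]
  push_cast
  ring

lemma kernel_eq {x y : ℝ} (hx : x ∈ S) (hy : y ∈ S) :
    ((1 - |x - y| : ℝ) : ℂ) = ∫ t in T, (e t x * e t y + f t x * f t y) := by
  rcases le_total x y with hxy | hxy
  · rw [kernel_eq_of_le hx.1 hxy (by have := hy.2; simp [S] at this ⊢; linarith),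
      abs_sub_comm, abs_of_nonneg (by linarith)]
  · have hswap : (fun t => e t x * e t y + f t x * f t y)
        = fun t => e t y * e t x + f t y * f t x := by funext t; ring
    rw [hswap, kernel_eq_of_le hy.1 hxy (by have := hx.2; simp [S] at this ⊢; linarith),
      abs_of_nonneg (by linarith)]

end kernel

section PQ

variable (φ : ℝ → ℂ)

/-- `P t = ∫_{x ∈ S, x ≤ t} φ`. -/
def P (t : ℝ) : ℂ := ∫ x in S, e t x * φ x
/-- `Q t = ∫_{x ∈ S, t < x} φ`. -/
def Q (t : ℝ) : ℂ := ∫ x in S, f t x * φ x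
/-- `I = ∫_S φ`. -/
def I : ℂ := ∫ x in S, φ x

variable {φ} {M : ℝ} (hφ : Continuous φ) (hM : ∀ x, ‖φ x‖ ≤ M)

lemma cont_integrableOn_S {E : Type*} [NormedAddCommGroup E] {u : ℝ → E}
    (hu : Continuous u) : IntegrableOn u S :=
  (hu.integrableOn_Ioc (a := 0) (b := 1/2)).mono_set Set.Ioo_subset_Ioc_self

lemma volume_S_toReal : (volume S).toReal = 1/2 := by
  rw [volume_S, ENNReal.toReal_ofReal (by norm_num)]

include hφ in
lemma integrableOn_e_mul (t : ℝ) : IntegrableOn (fun x => e t x * φ x) S := by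
  refine Integrable.mono' (g := fun x => ‖φ x‖) (cont_integrableOn_S hφ.norm)
    ?_ (ae_of_all _ fun x => ?_)
  · exact ((measurable_e_comp measurable_const measurable_id).mul
      hφ.measurable).aestronglyMeasurable
  · calc ‖e t x * φ x‖ = ‖e t x‖ * ‖φ x‖ := norm_mul _ _
      _ ≤ 1 * ‖φ x‖ := mul_le_mul_of_nonneg_right (norm_e_le_one t x) (norm_nonneg _)
      _ = ‖φ x‖ := one_mul _

include hφ in
lemma integrableOn_f_mul (t : ℝ) : IntegrableOn (fun x => f t x * φ x) S := by
  refine Integrable.mono' (g := fun x => ‖φ x‖) (cont_integrableOn_S hφ.norm)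
    ?_ (ae_of_all _ fun x => ?_)
  · exact ((measurable_f_comp measurable_const measurable_id).mul
      hφ.measurable).aestronglyMeasurable
  · calc ‖f t x * φ x‖ = ‖f t x‖ * ‖φ x‖ := norm_mul _ _
      _ ≤ 1 * ‖φ x‖ := mul_le_mul_of_nonneg_right (norm_f_le_one t x) (norm_nonneg _)
      _ = ‖φ x‖ := one_mul _

include hM in
lemma M_nonneg : 0 ≤ M := le_trans (norm_nonneg (φ 0)) (hM 0)

include hM in
lemma norm_P_le (t : ℝ) : ‖P φ t‖ ≤ M := by
  have h1 : ‖P φ t‖ ≤ M * (volume S).toReal := by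
    refine norm_setIntegral_le_of_norm_le_const volume_S_ne_top.lt_top
      (fun x _ => ?_)
    calc ‖e t x * φ x‖ = ‖e t x‖ * ‖φ x‖ := norm_mul _ _
      _ ≤ 1 * M := mul_le_mul (norm_e_le_one t x) (hM x) (norm_nonneg _) zero_le_one
      _ = M := one_mul _
  have hM0 : 0 ≤ M := M_nonneg hM
  rw [volume_S_toReal] at h1
  linarith

include hM in
lemma norm_Q_le (t : ℝ) : ‖Q φ t‖ ≤ M := by
  have h1 : ‖Q φ t‖ ≤ M * (volume S).toReal := by
    refine norm_setIntegral_le_of_norm_le_const volume_S_ne_top.lt_top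
      (fun x _ => ?_)
    calc ‖f t x * φ x‖ = ‖f t x‖ * ‖φ x‖ := norm_mul _ _
      _ ≤ 1 * M := mul_le_mul (norm_f_le_one t x) (hM x) (norm_nonneg _) zero_le_one
      _ = M := one_mul _
  have hM0 : 0 ≤ M := M_nonneg hM
  rw [volume_S_toReal] at h1
  linarith

include hφ in
lemma measurable_P : Measurable (P φ) := by
  have : StronglyMeasurable fun q : ℝ × ℝ => e q.1 q.2 * φ q.2 :=
    ((measurable_e_comp measurable_fst measurable_snd).mul
      (hφ.measurable.comp measurable_snd)).stronglyMeasurable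
  exact (this.integral_prod_right' (ν := volume.restrict S)).measurable

include hφ in
lemma measurable_Q : Measurable (Q φ) := by
  have : StronglyMeasurable fun q : ℝ × ℝ => f q.1 q.2 * φ q.2 :=
    ((measurable_f_comp measurable_fst measurable_snd).mul
      (hφ.measurable.comp measurable_snd)).stronglyMeasurable
  exact (this.integral_prod_right' (ν := volume.restrict S)).measurable

lemma P_eq_I {t : ℝ} (ht : 1/2 ≤ t) : P φ t = I φ := by
  refine setIntegral_congr_fun measurableSet_S fun x hx => ?_
  have : x ≤ t := le_trans (le_of_lt hx.2) ht
  simp [e, this]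

lemma Q_eq_zero {t : ℝ} (ht : 1/2 ≤ t) : Q φ t = 0 := by
  have : ∀ x ∈ S, f t x * φ x = (0:ℂ) := by
    intro x hx
    have : ¬ t < x := not_lt.2 (le_of_lt (lt_of_lt_of_le hx.2 ht))
    simp [f, this]
  rw [Q, setIntegral_congr_fun measurableSet_S this, integral_zero]

include hφ hM in
lemma D_eq :
    (∫ x in S, ∫ y in S, conj (φ x) * φ y * ((1 - |x - y| : ℝ) : ℂ))
      = (((∫ t in T, (‖P φ t‖^2 + ‖Q φ t‖^2)) : ℝ) : ℂ) := by
  have hM0 : 0 ≤ M := M_nonneg hM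
  -- Step 1: replace the kernel by the `t`-integral and pull the factor inside
  have step1 : (∫ x in S, ∫ y in S, conj (φ x) * φ y * ((1 - |x - y| : ℝ) : ℂ))
      = ∫ x in S, ∫ y in S, ∫ t in T,
          conj (φ x) * φ y * (e t x * e t y + f t x * f t y) := by
    refine setIntegral_congr_fun measurableSet_S fun x hx => ?_
    refine setIntegral_congr_fun measurableSet_S fun y hy => ?_
    rw [kernel_eq hx hy, integral_const_mul]
  rw [step1]
  -- Step 2: swap the `y` and `t` integrals
  have swap1 : ∀ x : ℝ,
      (∫ y in S, ∫ t in T, conj (φ x) * φ y * (e t x * e t y + f t x * f t y))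
        = ∫ t in T, ∫ y in S, conj (φ x) * φ y * (e t x * e t y + f t x * f t y) := by
    intro x
    refine integral_integral_swap ?_
    have hmeas : AEStronglyMeasurable
        (fun p : ℝ × ℝ => conj (φ x) * φ p.1 * (e p.2 x * e p.2 p.1 + f p.2 x * f p.2 p.1))
        ((volume.restrict S).prod (volume.restrict T)) := by
      refine Measurable.aestronglyMeasurable ?_
      exact (measurable_const.mul (hφ.measurable.comp measurable_fst)).mul
        (((measurable_e_comp measurable_snd measurable_const).mul
            (measurable_e_comp measurable_snd measurable_fst)).add
          ((measurable_f_comp measurable_snd measurable_const).mul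
            (measurable_f_comp measurable_snd measurable_fst)))
    refine Integrable.mono' (g := fun _ => M * M * 2) (integrable_const _) hmeas
      (ae_of_all _ fun p => ?_)
    have h1 : ‖conj (φ x) * φ p.1‖ ≤ M * M := by
      rw [norm_mul, RCLike.norm_conj]
      exact mul_le_mul (hM x) (hM p.1) (norm_nonneg _) hM0
    have h2 : ‖e p.2 x * e p.2 p.1 + f p.2 x * f p.2 p.1‖ ≤ 2 := by
      refine le_trans (norm_add_le _ _) ?_
      rw [norm_mul, norm_mul]
      have := norm_e_le_one p.2 x
      have := norm_e_le_one p.2 p.1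
      have := norm_f_le_one p.2 x
      have := norm_f_le_one p.2 p.1
      have := norm_nonneg (e p.2 x)
      have := norm_nonneg (f p.2 x)
      have := norm_nonneg (e p.2 p.1)
      have := norm_nonneg (f p.2 p.1)
      nlinarith
    calc ‖conj (φ x) * φ p.1 * (e p.2 x * e p.2 p.1 + f p.2 x * f p.2 p.1)‖
        = ‖conj (φ x) * φ p.1‖ * ‖e p.2 x * e p.2 p.1 + f p.2 x * f p.2 p.1‖ := norm_mul _ _
      _ ≤ (M * M) * 2 := mul_le_mul h1 h2 (norm_nonneg _) (by positivity)
      _ = M * M * 2 := rfl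
  simp only [swap1]
  -- Step 3: factor the inner `y` integral
  have factor1 : ∀ x t : ℝ,
      (∫ y in S, conj (φ x) * φ y * (e t x * e t y + f t x * f t y))
        = conj (φ x) * e t x * P φ t + conj (φ x) * f t x * Q φ t := by
    intro x t
    have hpt : ∀ y : ℝ, conj (φ x) * φ y * (e t x * e t y + f t x * f t y)
        = (conj (φ x) * e t x) * (e t y * φ y) + (conj (φ x) * f t x) * (f t y * φ y) :=
      fun y => by ring
    simp only [hpt]
    rw [integral_add ((integrableOn_e_mul hφ t).const_mul _)
        ((integrableOn_f_mul hφ t).const_mul _), integral_const_mul, integral_const_mul]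
    simp only [P, Q, mul_assoc]
  simp only [factor1]
  -- Step 4: swap the `x` and `t` integrals
  have swap2 : (∫ x in S, ∫ t in T,
        (conj (φ x) * e t x * P φ t + conj (φ x) * f t x * Q φ t))
      = ∫ t in T, ∫ x in S,
        (conj (φ x) * e t x * P φ t + conj (φ x) * f t x * Q φ t) := by
    refine integral_integral_swap ?_
    have hmeas : AEStronglyMeasurable
        (fun p : ℝ × ℝ => conj (φ p.1) * e p.2 p.1 * P φ p.2
          + conj (φ p.1) * f p.2 p.1 * Q φ p.2)
        ((volume.restrict S).prod (volume.restrict T)) := by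
      refine Measurable.aestronglyMeasurable ?_
      have hconj : Measurable fun p : ℝ × ℝ => conj (φ p.1) :=
        (RCLike.continuous_conj.comp hφ).measurable.comp measurable_fst
      exact ((hconj.mul (measurable_e_comp measurable_snd measurable_fst)).mul
          ((measurable_P hφ).comp measurable_snd)).add
        ((hconj.mul (measurable_f_comp measurable_snd measurable_fst)).mul
          ((measurable_Q hφ).comp measurable_snd))
    refine Integrable.mono' (g := fun _ => M * M + M * M) (integrable_const _) hmeas
      (ae_of_all _ fun p => ?_)
    refine le_trans (norm_add_le _ _) ?_
    have h1 : ‖conj (φ p.1) * e p.2 p.1 * P φ p.2‖ ≤ M * M := by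
      rw [norm_mul, norm_mul, RCLike.norm_conj]
      calc ‖φ p.1‖ * ‖e p.2 p.1‖ * ‖P φ p.2‖
          ≤ (M * 1) * M := mul_le_mul (mul_le_mul (hM p.1) (norm_e_le_one _ _)
              (norm_nonneg _) hM0) (norm_P_le hM _) (norm_nonneg _) (by positivity)
        _ = M * M := by ring
    have h2 : ‖conj (φ p.1) * f p.2 p.1 * Q φ p.2‖ ≤ M * M := by
      rw [norm_mul, norm_mul, RCLike.norm_conj]
      calc ‖φ p.1‖ * ‖f p.2 p.1‖ * ‖Q φ p.2‖
          ≤ (M * 1) * M := mul_le_mul (mul_le_mul (hM p.1) (norm_f_le_one _ _)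
              (norm_nonneg _) hM0) (norm_Q_le hM _) (norm_nonneg _) (by positivity)
        _ = M * M := by ring
    exact add_le_add h1 h2
  rw [swap2]
  -- Step 5: factor the inner `x` integral
  have hconjφ : Continuous fun x => conj (φ x) := RCLike.continuous_conj.comp hφ
  have factor2 : ∀ t : ℝ,
      (∫ x in S, (conj (φ x) * e t x * P φ t + conj (φ x) * f t x * Q φ t))
        = conj (P φ t) * P φ t + conj (Q φ t) * Q φ t := by
    intro t
    have hpt : ∀ x : ℝ, conj (φ x) * e t x * P φ t + conj (φ x) * f t x * Q φ t
        = (e t x * conj (φ x)) * P φ t + (f t x * conj (φ x)) * Q φ t := fun x => by ring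
    simp only [hpt]
    have hPe : (∫ x in S, e t x * conj (φ x)) = conj (P φ t) := by
      rw [P, ← integral_conj]
      refine setIntegral_congr_fun measurableSet_S fun x _ => ?_
      rw [map_mul, conj_e]
    have hQf : (∫ x in S, f t x * conj (φ x)) = conj (Q φ t) := by
      rw [Q, ← integral_conj]
      refine setIntegral_congr_fun measurableSet_S fun x _ => ?_
      rw [map_mul, conj_f]
    rw [integral_add ((integrableOn_e_mul hconjφ t).mul_const _)
        ((integrableOn_f_mul hconjφ t).mul_const _), integral_mul_const,
      integral_mul_const, hPe, hQf]
  simp only [factor2]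
  -- Step 6: realify
  have hsq : ∀ z : ℂ, conj z * z = ((‖z‖^2 : ℝ) : ℂ) := by
    intro z
    rw [mul_comm, Complex.mul_conj, Complex.normSq_eq_norm_sq]
  have : ∀ t : ℝ, conj (P φ t) * P φ t + conj (Q φ t) * Q φ t
      = (((‖P φ t‖^2 + ‖Q φ t‖^2 : ℝ)) : ℂ) := by
    intro t
    rw [hsq, hsq]
    push_cast
    ring
  simp only [this]
  exact integral_ofReal

include hφ hM in
lemma integrableOn_nPQ : IntegrableOn (fun t => ‖P φ t‖^2 + ‖Q φ t‖^2) T := by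
  refine Integrable.mono' (g := fun _ => M^2 + M^2) (integrable_const _) ?_
    (ae_of_all _ fun t => ?_)
  · exact (((measurable_P hφ).norm.pow_const 2).add
      ((measurable_Q hφ).norm.pow_const 2)).aestronglyMeasurable
  · rw [Real.norm_eq_abs, abs_of_nonneg (by positivity)]
    show ‖P φ t‖^2 + ‖Q φ t‖^2 ≤ M^2 + M^2
    have h1 := norm_P_le hM (φ := φ) t
    have h2 := norm_Q_le hM (φ := φ) t
    have h3 := norm_nonneg (P φ t)
    have h4 := norm_nonneg (Q φ t)
    nlinarith

include hφ hM in
lemma half_normI_le_D : (1/2) * ‖I φ‖^2 ≤ ∫ t in T, (‖P φ t‖^2 + ‖Q φ t‖^2) := by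
  have hsub : Set.Ioo (1/2 : ℝ) 1 ⊆ T := fun t ht => ⟨lt_trans (by norm_num) ht.1, ht.2⟩
  have h1 : (∫ t in Set.Ioo (1/2:ℝ) 1, (‖P φ t‖^2 + ‖Q φ t‖^2))
      ≤ ∫ t in T, (‖P φ t‖^2 + ‖Q φ t‖^2) :=
    setIntegral_mono_set (integrableOn_nPQ hφ hM)
      (ae_of_all _ fun t => by positivity) (HasSubset.Subset.eventuallyLE hsub)
  have h2 : (∫ t in Set.Ioo (1/2:ℝ) 1, (‖P φ t‖^2 + ‖Q φ t‖^2))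
      = ∫ t in Set.Ioo (1/2:ℝ) 1, ‖I φ‖^2 := by
    refine setIntegral_congr_fun measurableSet_Ioo fun t ht => ?_
    rw [P_eq_I (le_of_lt ht.1), Q_eq_zero (le_of_lt ht.1)]
    simp
  rw [h2] at h1
  rw [setIntegral_const, measureReal_def, Real.volume_Ioo, ENNReal.toReal_ofReal (by norm_num),
    smul_eq_mul] at h1
  calc (1/2) * ‖I φ‖^2 = (1 - 1/2) * ‖I φ‖^2 := by norm_num
    _ ≤ _ := h1

include hφ hM in
lemma integrableOn_nQ_S : IntegrableOn (fun t => ‖Q φ t‖^2) S := by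
  refine Integrable.mono' (g := fun _ => M^2) (integrable_const _) ?_
    (ae_of_all _ fun t => ?_)
  · exact ((measurable_Q hφ).norm.pow_const 2).aestronglyMeasurable
  · rw [Real.norm_eq_abs, abs_of_nonneg (by positivity)]
    show ‖Q φ t‖^2 ≤ M^2
    have h2 := norm_Q_le hM (φ := φ) t
    have h4 := norm_nonneg (Q φ t)
    nlinarith

include hφ hM in
lemma nQ_le_D : (∫ t in S, ‖Q φ t‖^2) ≤ ∫ t in T, (‖P φ t‖^2 + ‖Q φ t‖^2) := by
  have hsub : S ⊆ T := fun t ht => ⟨ht.1, lt_trans ht.2 (by norm_num)⟩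
  have h1 : (∫ t in S, (‖P φ t‖^2 + ‖Q φ t‖^2))
      ≤ ∫ t in T, (‖P φ t‖^2 + ‖Q φ t‖^2) :=
    setIntegral_mono_set (integrableOn_nPQ hφ hM)
      (ae_of_all _ fun t => by positivity) (HasSubset.Subset.eventuallyLE hsub)
  have h2 : (∫ t in S, ‖Q φ t‖^2) ≤ ∫ t in S, (‖P φ t‖^2 + ‖Q φ t‖^2) := by
    refine setIntegral_mono_on (integrableOn_nQ_S hφ hM)
      ((integrableOn_nPQ hφ hM).mono_set hsub) measurableSet_S fun t _ => ?_
    nlinarith [norm_nonneg (P φ t), sq_nonneg ‖P φ t‖]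
  linarith

include hφ hM in
lemma memLp_Q : MemLp (Q φ) 2 (volume.restrict S) :=
  MemLp.of_bound (measurable_Q hφ).aestronglyMeasurable.restrict M
    (ae_of_all _ (norm_Q_le hM))

lemma D_nonneg : 0 ≤ ∫ t in T, (‖P φ t‖^2 + ‖Q φ t‖^2) :=
  integral_nonneg fun t => by positivity

end PQ

section LHS

variable {φ : ℝ → ℂ} {M : ℝ} {g : ℝ → ℂ} {h : ℝ → ℂ}
variable (hφ : Continuous φ) (hM : ∀ x, ‖φ x‖ ≤ M)
variable (hg : MemLp g 2 (volume.restrict (Set.Ioo 0 (1/2))))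

include hg in
lemma integrableOn_g : IntegrableOn g S := hg.integrable one_le_two

include hg in
lemma aesm_conj_g : AEStronglyMeasurable (fun t => conj (g t)) (volume.restrict S) :=
  RCLike.continuous_conj.comp_aestronglyMeasurable hg.1

include hg in
lemma Rg_eq {x : ℝ} (hx : x ∈ S) :
    (∫ t in S, f t x * conj (g t)) = conj (∫ t in (0:ℝ)..x, g t) := by
  have h1 : ∀ t, f t x * conj (g t)
      = Set.indicator (Set.Iio x) (fun t => conj (g t)) t := by
    intro t
    rw [Set.indicator_apply]
    unfold f
    by_cases hlt : t < x
    · simp [hlt, Set.mem_Iio]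
    · simp [hlt, Set.mem_Iio]
  simp only [h1]
  rw [setIntegral_indicator measurableSet_Iio]
  have hset : S ∩ Set.Iio x = Set.Ioo 0 x := by
    ext t
    constructor
    · rintro ⟨⟨ht1, ht2⟩, ht3⟩; exact ⟨ht1, ht3⟩
    · rintro ⟨ht1, ht3⟩; exact ⟨⟨ht1, ht3.trans hx.2⟩, ht3⟩
  rw [hset, intervalIntegral.integral_of_le (le_of_lt hx.1),
    integral_Ioc_eq_integral_Ioo, ← integral_conj]

include hφ hM hg in
lemma integrableOn_Rg_mul :
    IntegrableOn (fun x => (∫ t in S, f t x * conj (g t)) * φ x) S := by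
  have hM0 : 0 ≤ M := M_nonneg hM
  have hmeas : AEStronglyMeasurable (fun x => ∫ t in S, f t x * conj (g t))
      (volume.restrict S) := by
    have hprod : AEStronglyMeasurable (fun q : ℝ × ℝ => f q.2 q.1 * conj (g q.2))
        ((volume.restrict S).prod (volume.restrict S)) :=
      ((measurable_f_comp measurable_snd measurable_fst).aestronglyMeasurable).mul
        (aesm_conj_g hg).comp_snd
    exact hprod.integral_prod_right'
  refine Integrable.mono' (g := fun _ => (∫ t in S, ‖g t‖) * M) (integrable_const _)
    (hmeas.mul hφ.aestronglyMeasurable) (ae_of_all _ fun x => ?_)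
  have hR : ‖∫ t in S, f t x * conj (g t)‖ ≤ ∫ t in S, ‖g t‖ := by
    refine le_trans (norm_integral_le_integral_norm _) ?_
    refine integral_mono_of_nonneg (ae_of_all _ fun t => norm_nonneg _)
      (integrableOn_g hg).norm (ae_of_all _ fun t => ?_)
    show ‖f t x * conj (g t)‖ ≤ ‖g t‖
    rw [norm_mul, RCLike.norm_conj]
    calc ‖f t x‖ * ‖g t‖ ≤ 1 * ‖g t‖ :=
          mul_le_mul_of_nonneg_right (norm_f_le_one t x) (norm_nonneg _)
      _ = ‖g t‖ := one_mul _
  rw [norm_mul]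
  exact mul_le_mul hR (hM x) (norm_nonneg _)
    (le_trans (norm_nonneg _) hR)

include hφ hM hg in
lemma Rg_fubini :
    (∫ x in S, (∫ t in S, f t x * conj (g t)) * φ x)
      = ∫ t in S, conj (g t) * Q φ t := by
  have hM0 : 0 ≤ M := M_nonneg hM
  have h0 : ∀ x : ℝ, (∫ t in S, f t x * conj (g t)) * φ x
      = ∫ t in S, f t x * conj (g t) * φ x := fun x => (integral_mul_const _ _).symm
  simp only [h0]
  have hswap : (∫ x in S, ∫ t in S, f t x * conj (g t) * φ x)
      = ∫ t in S, ∫ x in S, f t x * conj (g t) * φ x := by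
    refine integral_integral_swap ?_
    have hmeas : AEStronglyMeasurable
        (fun p : ℝ × ℝ => f p.2 p.1 * conj (g p.2) * φ p.1)
        ((volume.restrict S).prod (volume.restrict S)) :=
      (((measurable_f_comp measurable_snd measurable_fst).aestronglyMeasurable).mul
        (aesm_conj_g hg).comp_snd).mul
        ((hφ.comp continuous_fst).aestronglyMeasurable)
    have hdom : Integrable (fun p : ℝ × ℝ => M * ‖g p.2‖)
        ((volume.restrict S).prod (volume.restrict S)) :=
      Integrable.mul_prod (integrable_const M) (integrableOn_g hg).norm
    refine Integrable.mono' hdom hmeas (ae_of_all _ fun p => ?_)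
    show ‖f p.2 p.1 * conj (g p.2) * φ p.1‖ ≤ M * ‖g p.2‖
    rw [norm_mul, norm_mul, RCLike.norm_conj]
    calc ‖f p.2 p.1‖ * ‖g p.2‖ * ‖φ p.1‖
        ≤ (1 * ‖g p.2‖) * M := mul_le_mul
          (mul_le_mul_of_nonneg_right (norm_f_le_one _ _) (norm_nonneg _))
          (hM p.1) (norm_nonneg _) (by positivity)
      _ = M * ‖g p.2‖ := by ring
  rw [hswap]
  refine integral_congr_ae (ae_of_all _ fun t => ?_)
  have h1 : ∀ x : ℝ, f t x * conj (g t) * φ x = conj (g t) * (f t x * φ x) :=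
    fun x => by ring
  simp only [h1]
  rw [integral_const_mul]
  rfl

include hφ hM hg in
lemma L_split (hrep : ∀ x ∈ Set.Icc (0:ℝ) (1/2), h x = h 0 + ∫ t in (0:ℝ)..x, g t) :
    (∫ x in S, conj (h x) * φ x)
      = conj (h 0) * I φ + ∫ t in S, conj (g t) * Q φ t := by
  have hcongr : ∀ x ∈ S, conj (h x) * φ x
      = conj (h 0) * φ x + (∫ t in S, f t x * conj (g t)) * φ x := by
    intro x hx
    have hx' : x ∈ Set.Icc (0:ℝ) (1/2) := ⟨le_of_lt hx.1, le_of_lt hx.2⟩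
    rw [hrep x hx', map_add, Rg_eq hg hx, add_mul]
  rw [setIntegral_congr_fun measurableSet_S hcongr,
    integral_add ((cont_integrableOn_S hφ).const_mul _) (integrableOn_Rg_mul hφ hM hg),
    integral_const_mul, Rg_fubini hφ hM hg]
  rfl

include hφ hM hg in
lemma holder_bound :
    ‖∫ t in S, conj (g t) * Q φ t‖
      ≤ (∫ t in S, ‖g t‖ ^ (2:ℝ)) ^ (1/(2:ℝ))
        * (∫ t in S, ‖Q φ t‖ ^ (2:ℝ)) ^ (1/(2:ℝ)) := by
  have hpq : (2:ℝ).HolderConjugate 2 := Real.holderConjugate_iff.2 ⟨one_lt_two, by norm_num⟩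
  have h2 : ENNReal.ofReal (2:ℝ) = 2 := by
    rw [show (2:ℝ) = ((2:ℕ):ℝ) by norm_num, ENNReal.ofReal_natCast]
    norm_num
  have hgQ := integral_mul_norm_le_Lp_mul_Lq (μ := volume.restrict S) hpq
    (f := g) (g := Q φ) (by rw [h2]; exact hg) (by rw [h2]; exact memLp_Q hφ hM)
  refine le_trans ?_ hgQ
  refine le_trans (norm_integral_le_integral_norm _) (le_of_eq ?_)
  refine integral_congr_ae (ae_of_all _ fun t => ?_)
  show ‖conj (g t) * Q φ t‖ = ‖g t‖ * ‖Q φ t‖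
  rw [norm_mul, RCLike.norm_conj]

end LHS

end

end Stmt16Aux

open Stmt16Aux

theorem stmt_16 (h : ℝ → ℂ) (hc : ContinuousOn h (Set.Icc (0:ℝ) (1/2)))
    (g : ℝ → ℂ) (hg : MemLp g 2 (volume.restrict (Set.Ioo 0 (1/2))))
    (hrep : ∀ x ∈ Set.Icc (0:ℝ) (1/2), h x = h 0 + ∫ t in (0:ℝ)..x, g t) :
    ∃ C : ℝ, 0 ≤ C ∧
      ∀ φ : ℝ → ℂ, ContDiff ℝ (⊤ : ℕ∞) φ → tsupport φ ⊆ Set.Ioo 0 (1/2) →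
        ((‖∫ x in (0:ℝ)..(1/2), conj (h x) * φ x‖ ^ 2 : ℝ) : ℂ) ≤
          (C : ℂ) * ∫ x in (0:ℝ)..(1/2), ∫ y in (0:ℝ)..(1/2),
            conj (φ x) * φ y * ((1 - |x - y| : ℝ) : ℂ) := by
  have hA0 : (0:ℝ) ≤ ∫ t in S, ‖g t‖^2 := integral_nonneg fun t => by positivity
  refine ⟨4 * ‖h 0‖^2 + 2 * (∫ t in S, ‖g t‖^2) + 1, by positivity, ?_⟩
  intro φ hφsm hφsupp
  have hφc : Continuous φ := hφsm.continuous
  have hcs : HasCompactSupport φ :=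
    Metric.isCompact_of_isClosed_isBounded (isClosed_tsupport φ)
      ((Metric.isBounded_Ioo 0 (1/2)).subset hφsupp)
  obtain ⟨M, hM⟩ : ∃ M, ∀ x, ‖φ x‖ ≤ M :=
    hφc.bounded_above_of_compact_support hcs
  have hle : (0:ℝ) ≤ 1/2 := by norm_num
  -- rewrite the right-hand side
  have hRHS : (∫ x in (0:ℝ)..(1/2), ∫ y in (0:ℝ)..(1/2),
        conj (φ x) * φ y * ((1 - |x - y| : ℝ) : ℂ))
      = (((∫ t in T, (‖P φ t‖^2 + ‖Q φ t‖^2)) : ℝ) : ℂ) := by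
    rw [intervalIntegral.integral_of_le hle, integral_Ioc_eq_integral_Ioo]
    simp_rw [intervalIntegral.integral_of_le hle, integral_Ioc_eq_integral_Ioo]
    exact D_eq hφc hM
  have hLHS : (∫ x in (0:ℝ)..(1/2), conj (h x) * φ x)
      = conj (h 0) * I φ + ∫ t in S, conj (g t) * Q φ t := by
    rw [intervalIntegral.integral_of_le hle, integral_Ioc_eq_integral_Ioo]
    exact L_split hφc hM hg hrep
  rw [hRHS, hLHS, ← Complex.ofReal_mul, Complex.real_le_real]
  -- real inequality
  set Dr := ∫ t in T, (‖P φ t‖^2 + ‖Q φ t‖^2) with hDrdef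
  set L := conj (h 0) * I φ + ∫ t in S, conj (g t) * Q φ t with hLdef
  set A := ∫ t in S, ‖g t‖^2 with hAdef
  set NQ := ∫ t in S, ‖Q φ t‖^2 with hNQdef
  have hNI : ‖I φ‖^2 ≤ 2 * Dr := by
    have := half_normI_le_D hφc hM (φ := φ)
    rw [← hDrdef] at this
    linarith
  have hNQle : NQ ≤ Dr := nQ_le_D hφc hM
  have hDr0 : 0 ≤ Dr := D_nonneg
  have hNQ0 : 0 ≤ NQ := integral_nonneg fun t => by positivity
  have hconv : ∀ u : ℝ → ℂ, (∫ t in S, ‖u t‖ ^ (2:ℝ)) = ∫ t in S, ‖u t‖^2 := by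
    intro u
    refine integral_congr_ae (ae_of_all _ fun t => ?_)
    show ‖u t‖ ^ (2:ℝ) = ‖u t‖ ^ 2
    rw [show (2:ℝ) = ((2:ℕ):ℝ) by norm_num, Real.rpow_natCast]
  have hL1 : ‖L‖ ≤ ‖h 0‖ * ‖I φ‖ + A ^ (1/(2:ℝ)) * NQ ^ (1/(2:ℝ)) := by
    refine le_trans (norm_add_le _ _) (add_le_add ?_ ?_)
    · rw [norm_mul, RCLike.norm_conj]
    · have hb := holder_bound hφc hM hg
      rw [hconv, hconv] at hb
      exact hb
  have hhalf : ∀ x : ℝ, 0 ≤ x → (x ^ (1/(2:ℝ)))^2 = x := by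
    intro x hx
    rw [← Real.rpow_natCast (x ^ (1/(2:ℝ))) 2, ← Real.rpow_mul hx]
    norm_num
  have hsq : ‖L‖^2 ≤ (‖h 0‖ * ‖I φ‖ + A ^ (1/(2:ℝ)) * NQ ^ (1/(2:ℝ)))^2 := by
    have h0 : (0:ℝ) ≤ ‖L‖ := norm_nonneg _
    nlinarith [norm_nonneg L]
  have hexp : (‖h 0‖ * ‖I φ‖ + A ^ (1/(2:ℝ)) * NQ ^ (1/(2:ℝ)))^2
      ≤ 2 * (‖h 0‖^2 * ‖I φ‖^2) + 2 * (A * NQ) := by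
    have e1 : (A ^ (1/(2:ℝ)) * NQ ^ (1/(2:ℝ)))^2 = A * NQ := by
      rw [mul_pow, hhalf A hA0, hhalf NQ hNQ0]
    nlinarith [sq_nonneg (‖h 0‖ * ‖I φ‖ - A ^ (1/(2:ℝ)) * NQ ^ (1/(2:ℝ))), e1,
      sq_nonneg (‖h 0‖ * ‖I φ‖), sq_nonneg (A ^ (1/(2:ℝ)) * NQ ^ (1/(2:ℝ)))]
  have hfin : 2 * (‖h 0‖^2 * ‖I φ‖^2) + 2 * (A * NQ)
      ≤ (4 * ‖h 0‖^2 + 2 * A + 1) * Dr := by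
    have h1 : ‖h 0‖^2 * ‖I φ‖^2 ≤ ‖h 0‖^2 * (2 * Dr) :=
      mul_le_mul_of_nonneg_left hNI (by positivity)
    have h2 : A * NQ ≤ A * Dr := mul_le_mul_of_nonneg_left hNQle hA0
    nlinarith [sq_nonneg (‖h 0‖)]
  linarith
end

section
/- Let μ be a finite Borel measure on ℝⁿ whose support is contained in the closed ball of radius R centered at 0, and define F : ℝⁿ → ℂ by F(x) = ∫_{ℝⁿ} e^{i⟨λ,x⟩} dμ(λ). Then for every smooth compactly supported function φ : ℝⁿ → ℂ and every k ∈ {1,…,n}: | ∫_{ℝⁿ}∫_{ℝⁿ} conj(φ(x)) (∂φ/∂x_k)(y) F(x−y) dx dy | ≤ R · ∫_{ℝⁿ}∫_{ℝⁿ} conj(φ(x)) φ(y) F(x−y) dx dy. (This is the quadratic-form bound showing that each partial-derivative operator D_k^{(F)} : F_φ ↦ (1/i) F_{∂φ/∂x_k} is bounded in the RKHS H_F whenever some μ ∈ Ext(F) has compact support.) -/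
open MeasureTheory ComplexConjugate
open scoped RealInnerProductSpace ComplexOrder
open Real
open scoped FourierTransform

namespace Stmt18Aux

variable {n : ℕ}

noncomputable def Psi (g : EuclideanSpace ℝ (Fin n) → ℂ) (l : EuclideanSpace ℝ (Fin n)) : ℂ :=
  𝓕 g ((2 * Real.pi)⁻¹ • l)

lemma psi_eq (g : EuclideanSpace ℝ (Fin n) → ℂ) (l : EuclideanSpace ℝ (Fin n)) :
    ∫ v, g v * Complex.exp (-(Complex.I * (⟪l, v⟫ : ℝ))) = Psi g l := by
  rw [Psi, Real.fourier_eq']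
  refine integral_congr_ae (Filter.Eventually.of_forall fun v => ?_)
  show g v * Complex.exp (-(Complex.I * (⟪l, v⟫ : ℝ)))
      = Complex.exp (((-2 * Real.pi * ⟪v, (2 * Real.pi)⁻¹ • l⟫ : ℝ) : ℂ) * Complex.I) • g v
  rw [real_inner_smul_right, smul_eq_mul]
  have h : (-2 * Real.pi * ((2 * Real.pi)⁻¹ * ⟪v, l⟫)) = -⟪v, l⟫ := by
    field_simp
  rw [h, real_inner_comm v l]
  rw [mul_comm]
  congr 1
  push_cast
  ring

lemma psi_norm_le (g : EuclideanSpace ℝ (Fin n) → ℂ) (l : EuclideanSpace ℝ (Fin n)) :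
    ‖Psi g l‖ ≤ ∫ v, ‖g v‖ :=
  VectorFourier.norm_fourierIntegral_le_integral_norm _ _ _ _ _

lemma psi_continuous {g : EuclideanSpace ℝ (Fin n) → ℂ} (hg : Integrable g) :
    Continuous (Psi g) := by
  exact (VectorFourier.fourierIntegral_continuous Real.continuous_fourierChar
    (by exact continuous_inner) hg).comp (continuous_const_smul _)


lemma psi_deriv (φ : EuclideanSpace ℝ (Fin n) → ℂ) (hφ : ContDiff ℝ (⊤ : ℕ∞) φ)
    (hφs : HasCompactSupport φ) (k : Fin n) (l : EuclideanSpace ℝ (Fin n)) :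
    Psi (fun v => fderiv ℝ φ v (EuclideanSpace.single k 1)) l
      = Complex.I * (l k : ℝ) * Psi φ l := by
  have hφi : Integrable φ := hφ.continuous.integrable_of_hasCompactSupport hφs
  have hdc : Continuous (fderiv ℝ φ) := hφ.continuous_fderiv (by simp)
  have hdi : Integrable (fderiv ℝ φ) := hdc.integrable_of_hasCompactSupport (hφs.fderiv (𝕜 := ℝ))
  have h'f : Differentiable ℝ φ := hφ.differentiable (by simp)
  have h1 : Psi (fun v => fderiv ℝ φ v (EuclideanSpace.single k 1)) l
      = 𝓕 (fderiv ℝ φ) ((2 * Real.pi)⁻¹ • l) (EuclideanSpace.single k 1) :=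
    (Real.fourier_continuousLinearMap_apply hdi).symm
  rw [h1, Real.fourier_fderiv hφi h'f hdi]
  rw [VectorFourier.fourierSMulRight_apply]
  have h2 : (-(innerSL ℝ)) ((2 * Real.pi)⁻¹ • l) (EuclideanSpace.single k (1:ℝ))
      = -((2 * Real.pi)⁻¹ * l k) := by
    simp [EuclideanSpace.inner_single_right, real_inner_smul_left]
  rw [h2]
  rw [Psi]
  have hπ : (Real.pi : ℂ) ≠ 0 := by exact_mod_cast Real.pi_ne_zero
  rw [smul_eq_mul, Complex.real_smul]
  push_cast
  field_simp


lemma normE (r : ℝ) : ‖Complex.exp (Complex.I * r)‖ = 1 := by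
  simp [Complex.norm_exp]

lemma normE' (r : ℝ) : ‖Complex.exp (-(Complex.I * r))‖ = 1 := by
  simp [Complex.norm_exp]

lemma rep (μ : Measure (EuclideanSpace ℝ (Fin n))) [IsFiniteMeasure μ]
    (F : EuclideanSpace ℝ (Fin n) → ℂ)
    (hF : ∀ x, F x = ∫ l, Complex.exp (Complex.I * (⟪l, x⟫ : ℝ)) ∂μ)
    (φ h : EuclideanSpace ℝ (Fin n) → ℂ)
    (hφc : Continuous φ) (hφs : HasCompactSupport φ)
    (hhc : Continuous h) (hhs : HasCompactSupport h) :
    ∫ x, ∫ y, conj (φ x) * h y * F (x - y) = ∫ l, conj (Psi φ l) * Psi h l ∂μ := by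
  have hhi : Integrable h := hhc.integrable_of_hasCompactSupport hhs
  have hφi : Integrable φ := hφc.integrable_of_hasCompactSupport hφs
  have stepA : ∀ x, (∫ y, conj (φ x) * h y * F (x - y))
      = conj (φ x) * ∫ l, Complex.exp (Complex.I * (⟪l, x⟫ : ℝ)) * Psi h l ∂μ := by
    intro x
    have swap1 : Integrable (Function.uncurry fun y l =>
        h y * Complex.exp (Complex.I * (⟪l, x - y⟫ : ℝ))) (volume.prod μ) := by
      have hcont : Continuous fun p : EuclideanSpace ℝ (Fin n) × EuclideanSpace ℝ (Fin n) =>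
          h p.1 * Complex.exp (Complex.I * (⟪p.2, x - p.1⟫ : ℝ)) := by
        apply (hhc.comp continuous_fst).mul
        exact Complex.continuous_exp.comp (continuous_const.mul
          (Complex.continuous_ofReal.comp (continuous_inner.comp
            (continuous_snd.prodMk (continuous_const.sub continuous_fst)))))
      refine Integrable.mono' (hhi.norm.mul_prod (integrable_const 1))
        hcont.aestronglyMeasurable ?_
      refine Filter.Eventually.of_forall fun p => ?_
      show ‖h p.1 * Complex.exp (Complex.I * (⟪p.2, x - p.1⟫ : ℝ))‖ ≤ ‖h p.1‖ * 1
      rw [norm_mul, normE, mul_one]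
    have e1 : (∫ y, conj (φ x) * h y * F (x - y))
        = conj (φ x) * ∫ y, h y * F (x - y) := by
      rw [← integral_const_mul]
      refine integral_congr_ae (Filter.Eventually.of_forall fun y => ?_)
      ring
    rw [e1]
    congr 1
    have e2 : (∫ y, h y * F (x - y))
        = ∫ y, ∫ l, h y * Complex.exp (Complex.I * (⟪l, x - y⟫ : ℝ)) ∂μ := by
      refine integral_congr_ae (Filter.Eventually.of_forall fun y => ?_)
      show h y * F (x - y) = _
      rw [hF (x - y), ← integral_const_mul]
    rw [e2, integral_integral_swap swap1]
    refine integral_congr_ae (Filter.Eventually.of_forall fun l => ?_)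
    have e3 : ∀ y, h y * Complex.exp (Complex.I * (⟪l, x - y⟫ : ℝ))
        = Complex.exp (Complex.I * (⟪l, x⟫ : ℝ))
          * (h y * Complex.exp (-(Complex.I * (⟪l, y⟫ : ℝ)))) := by
      intro y
      have e4 : (Complex.I * ((⟪l, x - y⟫ : ℝ) : ℂ))
          = Complex.I * ((⟪l, x⟫ : ℝ) : ℂ) + (-(Complex.I * ((⟪l, y⟫ : ℝ) : ℂ))) := by
        rw [inner_sub_right]
        push_cast
        ring
      rw [e4, Complex.exp_add]
      ring
    simp_rw [e3]
    rw [integral_const_mul, psi_eq]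
  calc ∫ x, ∫ y, conj (φ x) * h y * F (x - y)
      = ∫ x, conj (φ x) * ∫ l, Complex.exp (Complex.I * (⟪l, x⟫ : ℝ)) * Psi h l ∂μ :=
        integral_congr_ae (Filter.Eventually.of_forall stepA)
    _ = ∫ x, ∫ l, conj (φ x) * (Complex.exp (Complex.I * (⟪l, x⟫ : ℝ)) * Psi h l) ∂μ :=
        integral_congr_ae (Filter.Eventually.of_forall fun x => (integral_const_mul _ _).symm)
    _ = ∫ l, (∫ x, conj (φ x) * (Complex.exp (Complex.I * (⟪l, x⟫ : ℝ)) * Psi h l)) ∂μ := by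
        have swap2 : Integrable (Function.uncurry fun x l =>
            conj (φ x) * (Complex.exp (Complex.I * (⟪l, x⟫ : ℝ)) * Psi h l)) (volume.prod μ) := ?_
        · exact integral_integral_swap swap2
        have hcont : Continuous fun p : EuclideanSpace ℝ (Fin n) × EuclideanSpace ℝ (Fin n) =>
            conj (φ p.1) * (Complex.exp (Complex.I * (⟪p.2, p.1⟫ : ℝ)) * Psi h p.2) := by
          refine Continuous.mul ?_ (Continuous.mul ?_ ((psi_continuous hhi).comp continuous_snd))
          · exact Complex.continuous_conj.comp (hφc.comp continuous_fst)
          · exact Complex.continuous_exp.comp (continuous_const.mul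
              (Complex.continuous_ofReal.comp (continuous_inner.comp
                (continuous_snd.prodMk continuous_fst))))
        refine Integrable.mono' (hφi.norm.mul_prod (integrable_const (∫ v, ‖h v‖)))
          hcont.aestronglyMeasurable ?_
        refine Filter.Eventually.of_forall fun p => ?_
        have habs : ∀ (z w : ℂ) (r : ℝ), ‖conj z * (Complex.exp (Complex.I * r) * w)‖
            = ‖z‖ * ‖w‖ := by
          intro z w r
          rw [norm_mul, norm_mul, normE, one_mul, RCLike.norm_conj]
        show ‖conj (φ p.1) * (Complex.exp (Complex.I * (⟪p.2, p.1⟫ : ℝ)) * Psi h p.2)‖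
            ≤ ‖φ p.1‖ * ∫ v, ‖h v‖
        rw [habs]
        exact mul_le_mul_of_nonneg_left (psi_norm_le h p.2) (norm_nonneg _)
    _ = ∫ l, conj (Psi φ l) * Psi h l ∂μ := by
        refine integral_congr_ae (Filter.Eventually.of_forall fun l => ?_)
        have e5 : ∀ x, conj (φ x) * (Complex.exp (Complex.I * (⟪l, x⟫ : ℝ)) * Psi h l)
            = (conj (φ x) * Complex.exp (Complex.I * (⟪l, x⟫ : ℝ))) * Psi h l := fun x => by ring
        simp_rw [e5]
        rw [integral_mul_const]
        congr 1
        rw [← psi_eq, ← integral_conj]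
        refine integral_congr_ae (Filter.Eventually.of_forall fun v => ?_)
        show conj (φ v) * Complex.exp (Complex.I * (⟪l, v⟫ : ℝ))
            = conj (φ v * Complex.exp (-(Complex.I * (⟪l, v⟫ : ℝ))))
        rw [map_mul]
        congr 1
        rw [← Complex.exp_conj]
        congr 1
        simp [Complex.conj_ofReal]


end Stmt18Aux

open Stmt18Aux

theorem stmt_18 (n : ℕ) (μ : Measure (EuclideanSpace ℝ (Fin n))) [IsFiniteMeasure μ]
    (R : ℝ) (hR : 0 ≤ R)
    (hsupp : μ (Metric.closedBall (0 : EuclideanSpace ℝ (Fin n)) R)ᶜ = 0)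
    (F : EuclideanSpace ℝ (Fin n) → ℂ)
    (hF : ∀ x, F x = ∫ l, Complex.exp (Complex.I * (⟪l, x⟫ : ℝ)) ∂μ)
    (φ : EuclideanSpace ℝ (Fin n) → ℂ)
    (hφ : ContDiff ℝ (⊤ : ℕ∞) φ) (hφs : HasCompactSupport φ) (k : Fin n) :
    ((‖∫ x, ∫ y,
        conj (φ x) * fderiv ℝ φ y (EuclideanSpace.single k 1) * F (x - y)‖ : ℝ) : ℂ) ≤
      (R : ℂ) * ∫ x, ∫ y, conj (φ x) * φ y * F (x - y) := by
  have hφc : Continuous φ := hφ.continuous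
  have hdc : Continuous (fun y => fderiv ℝ φ y (EuclideanSpace.single k 1)) :=
    ((ContinuousLinearMap.apply ℝ ℂ
      (EuclideanSpace.single k (1:ℝ))).continuous).comp (hφ.continuous_fderiv (by simp))
  have hds : HasCompactSupport (fun y => fderiv ℝ φ y (EuclideanSpace.single k 1)) :=
    (hφs.fderiv (𝕜 := ℝ)).comp_left
      (g := fun L : EuclideanSpace ℝ (Fin n) →L[ℝ] ℂ => L (EuclideanSpace.single k 1)) rfl
  have hφi : Integrable φ := hφc.integrable_of_hasCompactSupport hφs
  have hΦc : Continuous (Psi φ) := psi_continuous hφi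
  have hrep2 := rep μ F hF φ _ hφc hφs hdc hds
  have hrep1 := rep μ F hF φ φ hφc hφs hφc hφs
  have hals : ∀ l, conj (Psi φ l) * Psi (fun v => fderiv ℝ φ v (EuclideanSpace.single k 1)) l
      = Complex.I * (((l k) * Complex.normSq (Psi φ l) : ℝ) : ℂ) := by
    intro l
    rw [psi_deriv φ hφ hφs k l]
    rw [show conj (Psi φ l) * (Complex.I * ((l k : ℝ) : ℂ) * Psi φ l)
        = Complex.I * (((l k : ℝ) : ℂ) * (Psi φ l * conj (Psi φ l))) from by ring]
    rw [Complex.mul_conj]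
    push_cast
    ring
  have lhs_eq : (∫ x, ∫ y, conj (φ x) * fderiv ℝ φ y (EuclideanSpace.single k 1) * F (x - y))
      = Complex.I * ((∫ l, (l k) * Complex.normSq (Psi φ l) ∂μ : ℝ) : ℂ) := by
    rw [hrep2]
    rw [integral_congr_ae (Filter.Eventually.of_forall hals)]
    rw [integral_const_mul]
    congr 1
    exact integral_ofReal
  have rhs_eq : (∫ x, ∫ y, conj (φ x) * φ y * F (x - y))
      = ((∫ l, Complex.normSq (Psi φ l) ∂μ : ℝ) : ℂ) := by
    rw [hrep1]
    rw [integral_congr_ae (Filter.Eventually.of_forall fun l =>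
      show conj (Psi φ l) * Psi φ l = ((Complex.normSq (Psi φ l) : ℝ) : ℂ) from by
        rw [mul_comm, Complex.mul_conj])]
    exact integral_ofReal
  rw [lhs_eq, rhs_eq]
  set r : ℝ := ∫ l, (l k) * Complex.normSq (Psi φ l) ∂μ with hr
  set s : ℝ := ∫ l, Complex.normSq (Psi φ l) ∂μ with hs
  have habsI : ‖Complex.I * (r : ℂ)‖ = |r| := by
    rw [norm_mul, Complex.norm_I, Complex.norm_real, Real.norm_eq_abs, one_mul]
  rw [habsI, ← Complex.ofReal_mul, Complex.real_le_real]
  -- real inequality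
  have hmu_ae : ∀ᵐ l ∂μ, ‖l‖ ≤ R := by
    have h0 : ∀ᵐ l ∂μ, l ∈ Metric.closedBall (0 : EuclideanSpace ℝ (Fin n)) R :=
      ae_iff.mpr hsupp
    filter_upwards [h0] with l hl
    simpa [Metric.mem_closedBall, dist_zero_right] using hl
  have hcoord : ∀ l : EuclideanSpace ℝ (Fin n), |l k| ≤ ‖l‖ := by
    intro l
    have h1 : |⟪l, EuclideanSpace.single k (1:ℝ)⟫| ≤ ‖l‖ * ‖EuclideanSpace.single k (1:ℝ)‖ :=
      abs_real_inner_le_norm _ _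
    simpa [EuclideanSpace.inner_single_right, EuclideanSpace.norm_single] using h1
  have hcontS : Continuous fun l => Complex.normSq (Psi φ l) :=
    Complex.continuous_normSq.comp hΦc
  have hbound : ∀ l, Complex.normSq (Psi φ l) ≤ (∫ v, ‖φ v‖)^2 := by
    intro l
    rw [Complex.normSq_eq_norm_sq]
    have h1 := psi_norm_le φ l
    exact pow_le_pow_left₀ (norm_nonneg _) h1 2
  have hS : Integrable (fun l => Complex.normSq (Psi φ l)) μ :=
    Integrable.mono' (integrable_const ((∫ v, ‖φ v‖)^2)) hcontS.aestronglyMeasurable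
      (Filter.Eventually.of_forall fun l => by
        rw [Real.norm_eq_abs, abs_of_nonneg (Complex.normSq_nonneg _)]
        exact hbound l)
  have hRS : Integrable (fun l => R * Complex.normSq (Psi φ l)) μ := hS.const_mul R
  have hcontk : Continuous fun l : EuclideanSpace ℝ (Fin n) => l k :=
    (EuclideanSpace.proj (𝕜 := ℝ) k).continuous
  have hIabs : Integrable (fun l => |l k| * Complex.normSq (Psi φ l)) μ := by
    refine Integrable.mono' hRS (hcontk.abs.mul hcontS).aestronglyMeasurable ?_
    filter_upwards [hmu_ae] with l hl
    rw [Real.norm_eq_abs,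
      abs_of_nonneg (mul_nonneg (abs_nonneg _) (Complex.normSq_nonneg _))]
    exact mul_le_mul_of_nonneg_right ((hcoord l).trans hl) (Complex.normSq_nonneg _)
  calc |r| ≤ ∫ l, |l k| * |Complex.normSq (Psi φ l)| ∂μ := by
        rw [hr]
        simpa [Real.norm_eq_abs, abs_mul] using
          norm_integral_le_integral_norm (μ := μ) (fun l => (l k) * Complex.normSq (Psi φ l))
    _ = ∫ l, |l k| * Complex.normSq (Psi φ l) ∂μ :=
        integral_congr_ae (Filter.Eventually.of_forall fun l => by
          show |l k| * |Complex.normSq (Psi φ l)| = |l k| * Complex.normSq (Psi φ l)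
          rw [abs_of_nonneg (Complex.normSq_nonneg _)])
    _ ≤ ∫ l, R * Complex.normSq (Psi φ l) ∂μ := by
        refine integral_mono_ae hIabs hRS ?_
        filter_upwards [hmu_ae] with l hl
        exact mul_le_mul_of_nonneg_right ((hcoord l).trans hl) (Complex.normSq_nonneg _)
    _ = R * s := by rw [integral_const_mul, hs]
end
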